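/- arXiv:2107.14683 — 11 statements merged into one kernel-verified Lean document; each statement's English description precedes it below -/
import Mathlib

section
/- Let α, a, b, c : I → ℝ be differentiable functions on an open interval I ⊆ ℝ satisfying a' = (a/2)(−a² + b² + c²), b' = (b/2)(a² − b² + c²), c' = (c/2)(a² + b² − c² + 2α), and α' = c²α on I. If a, b, and α are everywhere positive on I, then the function (a·b)/α is constant on I; equivalently, there exists a constant A ∈ ℝ with α = e^{−A}·a·b on I. -/
/-! Dividing the equations for `a'`, `b'` and `α'` by `a`, `b` and `α` gives
`(log a)' + (log b)' = c² = (log α)'`, so `a b / α` has vanishing derivative on the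
interval `I` and is therefore constant; its value is positive, hence of the form `e^A`. -/

theorem Convex.eq_of_forall_hasDerivWithinAt_zero {E : Type*} [NormedAddCommGroup E]
    [NormedSpace ℝ E] {s : Set ℝ} (hs : Convex ℝ s) {f : ℝ → E}
    (hf : ∀ x ∈ s, HasDerivWithinAt f 0 s x) {x y : ℝ} (hx : x ∈ s) (hy : y ∈ s) :
    f x = f y := by
  have h := hs.norm_image_sub_le_of_norm_hasDerivWithin_le hf (fun _ _ => norm_zero.le) hx hy
  rw [zero_mul, norm_le_zero_iff, sub_eq_zero] at h
  exact h.symm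

theorem HasDerivAt.mul_div_eq_zero_of_logDeriv {a b α : ℝ → ℝ} {u v t : ℝ}
    (ha : HasDerivAt a (a t * u) t) (hb : HasDerivAt b (b t * v) t)
    (hα : HasDerivAt α (α t * (u + v)) t) (hα0 : α t ≠ 0) :
    HasDerivAt (fun s => a s * b s / α s) 0 t := by
  refine ((ha.mul hb).div hα hα0).congr_deriv ?_
  rw [Pi.mul_apply, div_eq_zero_iff]
  left
  ring

theorem su2_four_eq_system_ab_over_alpha_constant_general
    (I : Set ℝ) (hIconn : I.OrdConnected)
    (a b c α : ℝ → ℝ)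
    (ha : ∀ t ∈ I, HasDerivAt a (a t / 2 * (-(a t) ^ 2 + (b t) ^ 2 + (c t) ^ 2)) t)
    (hb : ∀ t ∈ I, HasDerivAt b (b t / 2 * ((a t) ^ 2 - (b t) ^ 2 + (c t) ^ 2)) t)
    (hα : ∀ t ∈ I, HasDerivAt α ((c t) ^ 2 * α t) t)
    (hapos : ∀ t ∈ I, 0 < a t) (hbpos : ∀ t ∈ I, 0 < b t) (hαpos : ∀ t ∈ I, 0 < α t) :
    (∀ s ∈ I, ∀ t ∈ I, a s * b s / α s = a t * b t / α t) ∧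
    ∃ A : ℝ, ∀ t ∈ I, α t = Real.exp (-A) * (a t * b t) := by
  have hderiv : ∀ t ∈ I, HasDerivWithinAt (fun s => a s * b s / α s) 0 I t := fun t ht =>
    HasDerivAt.hasDerivWithinAt <| HasDerivAt.mul_div_eq_zero_of_logDeriv
      (u := (-(a t) ^ 2 + (b t) ^ 2 + (c t) ^ 2) / 2) (v := ((a t) ^ 2 - (b t) ^ 2 + (c t) ^ 2) / 2)
      ((ha t ht).congr_deriv (by ring)) ((hb t ht).congr_deriv (by ring))
      ((hα t ht).congr_deriv (by ring)) (hαpos t ht).ne'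
  have hconst : ∀ s ∈ I, ∀ t ∈ I, a s * b s / α s = a t * b t / α t := fun s hs t ht =>
    hIconn.convex.eq_of_forall_hasDerivWithinAt_zero hderiv hs ht
  refine ⟨hconst, ?_⟩
  rcases I.eq_empty_or_nonempty with rfl | ⟨t₀, ht₀⟩
  · exact ⟨0, fun _ ht => ht.elim⟩
  have hpos : 0 < a t₀ * b t₀ / α t₀ :=
    div_pos (mul_pos (hapos t₀ ht₀) (hbpos t₀ ht₀)) (hαpos t₀ ht₀)
  refine ⟨Real.log (a t₀ * b t₀ / α t₀), fun t ht => ?_⟩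
  rw [Real.exp_neg, Real.exp_log hpos, hconst t₀ ht₀ t ht, inv_div,
    div_mul_cancel₀ _ (mul_pos (hapos t ht) (hbpos t ht)).ne']

/-- For the four-equation SU(2) centrally flat ODE system
`a' = (a/2)(−a² + b² + c²)`, `b' = (b/2)(a² − b² + c²)`,
`c' = (c/2)(a² + b² − c² + 2α)`, `α' = c²α` on an open interval `I`,
with `a`, `b`, `α` positive on `I`, the function `(a·b)/α` is constant on `I`;
equivalently there is a constant `A` with `α = e^(−A)·a·b` on `I`. -/
theorem su2_four_eq_system_ab_over_alpha_constant
    (I : Set ℝ) (hIopen : IsOpen I) (hIconn : I.OrdConnected)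
    (a b c α : ℝ → ℝ)
    (ha : ∀ t ∈ I, HasDerivAt a (a t / 2 * (-(a t) ^ 2 + (b t) ^ 2 + (c t) ^ 2)) t)
    (hb : ∀ t ∈ I, HasDerivAt b (b t / 2 * ((a t) ^ 2 - (b t) ^ 2 + (c t) ^ 2)) t)
    (hc : ∀ t ∈ I, HasDerivAt c (c t / 2 * ((a t) ^ 2 + (b t) ^ 2 - (c t) ^ 2 + 2 * α t)) t)
    (hα : ∀ t ∈ I, HasDerivAt α ((c t) ^ 2 * α t) t)
    (hapos : ∀ t ∈ I, 0 < a t) (hbpos : ∀ t ∈ I, 0 < b t) (hαpos : ∀ t ∈ I, 0 < α t) :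
    (∀ s ∈ I, ∀ t ∈ I, a s * b s / α s = a t * b t / α t) ∧
    ∃ A : ℝ, ∀ t ∈ I, α t = Real.exp (-A) * (a t * b t) :=
  su2_four_eq_system_ab_over_alpha_constant_general I hIconn a b c α ha hb hα hapos hbpos hαpos
end

section
/- Let A ∈ ℝ and let a, b, c : (ξ, η) → ℝ be differentiable functions on an open interval satisfying the SU(2) centrally flat ODE system a' = (a/2)(−a² + b² + c²), b' = (b/2)(a² − b² + c²), c' = (c/2)(a² + b² + 2e^{−A}ab − c²). If there exists t₀ ∈ (ξ, η) with a(t₀) > 0, b(t₀) > 0, and c(t₀) > 0, then a(t) > 0, b(t) > 0, and c(t) > 0 for every t ∈ (ξ, η). -/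
/-!
Each equation of the system has the form `x' = x g` with `g` continuous (a polynomial in
`a, b, c`), so `x t = x t₀ * exp (∫ u in t₀..t, g u)`: a component cannot change sign, whatever
the other two do.
-/

open Set Real

section LinearODE

variable {s : Set ℝ} {x g : ℝ → ℝ} {t₀ : ℝ}

theorem eq_mul_exp_integral_of_hasDerivAt_mul (hs : IsOpen s) (hs' : s.OrdConnected)
    (hx : ∀ t ∈ s, HasDerivAt x (x t * g t) t) (hg : ContinuousOn g s) (ht₀ : t₀ ∈ s) :
    ∀ t ∈ s, x t = x t₀ * exp (∫ u in t₀..t, g u) := by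
  set G : ℝ → ℝ := fun t => ∫ u in t₀..t, g u
  have hG : ∀ t ∈ s, HasDerivAt G (g t) t := fun t ht =>
    intervalIntegral.integral_hasDerivAt_right
      (hg.mono (hs'.uIcc_subset ht₀ ht)).intervalIntegrable
      (hg.stronglyMeasurableAtFilter hs t ht) (hg.continuousAt (hs.mem_nhds ht))
  have hF : ∀ t ∈ s, HasDerivAt (fun u => x u * exp (-G u)) 0 t := fun t ht =>
    ((hx t ht).mul (hG t ht).neg.exp).congr_deriv (by ring)
  have hconst : ∀ t ∈ s, x t * exp (-G t) = x t₀ := fun t ht => by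
    simpa [G] using hs.is_const_of_deriv_eq_zero hs'.isPreconnected
      (fun u hu => (hF u hu).differentiableAt.differentiableWithinAt)
      (fun u hu => (hF u hu).deriv) ht ht₀
  intro t ht
  rw [← hconst t ht, mul_assoc, ← exp_add, neg_add_cancel, exp_zero, mul_one]

theorem pos_of_hasDerivAt_mul (hs : IsOpen s) (hs' : s.OrdConnected)
    (hx : ∀ t ∈ s, HasDerivAt x (x t * g t) t) (hg : ContinuousOn g s) (ht₀ : t₀ ∈ s)
    (hx₀ : 0 < x t₀) {t : ℝ} (ht : t ∈ s) : 0 < x t := by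
  rw [eq_mul_exp_integral_of_hasDerivAt_mul hs hs' hx hg ht₀ t ht]
  positivity

end LinearODE

/-- For a solution of the SU(2) centrally flat ODE system on an open
interval `(ξ, η)`, if `a`, `b`, `c` are all positive at a single point `t₀ ∈ (ξ, η)`,
then they are positive throughout `(ξ, η)`. -/
theorem su2_system_positivity_persists
    (A ξ η : ℝ) (a b c : ℝ → ℝ)
    (ha : ∀ t ∈ Set.Ioo ξ η,
      HasDerivAt a (a t / 2 * (-(a t) ^ 2 + (b t) ^ 2 + (c t) ^ 2)) t)
    (hb : ∀ t ∈ Set.Ioo ξ η,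
      HasDerivAt b (b t / 2 * ((a t) ^ 2 - (b t) ^ 2 + (c t) ^ 2)) t)
    (hc : ∀ t ∈ Set.Ioo ξ η, HasDerivAt c
      (c t / 2 * ((a t) ^ 2 + (b t) ^ 2 + 2 * Real.exp (-A) * a t * b t - (c t) ^ 2)) t)
    (t₀ : ℝ) (ht₀ : t₀ ∈ Set.Ioo ξ η)
    (ha₀ : 0 < a t₀) (hb₀ : 0 < b t₀) (hc₀ : 0 < c t₀) :
    ∀ t ∈ Set.Ioo ξ η, 0 < a t ∧ 0 < b t ∧ 0 < c t := by
  have hca : ContinuousOn a (Ioo ξ η) := HasDerivAt.continuousOn ha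
  have hcb : ContinuousOn b (Ioo ξ η) := HasDerivAt.continuousOn hb
  have hcc : ContinuousOn c (Ioo ξ η) := HasDerivAt.continuousOn hc
  intro t ht
  refine ⟨?_, ?_, ?_⟩
  · exact pos_of_hasDerivAt_mul isOpen_Ioo ordConnected_Ioo
      (g := fun t => (-(a t) ^ 2 + (b t) ^ 2 + (c t) ^ 2) / 2)
      (fun t ht => (ha t ht).congr_deriv (by ring)) (by fun_prop) ht₀ ha₀ ht
  · exact pos_of_hasDerivAt_mul isOpen_Ioo ordConnected_Ioo
      (g := fun t => ((a t) ^ 2 - (b t) ^ 2 + (c t) ^ 2) / 2)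
      (fun t ht => (hb t ht).congr_deriv (by ring)) (by fun_prop) ht₀ hb₀ ht
  · exact pos_of_hasDerivAt_mul isOpen_Ioo ordConnected_Ioo
      (g := fun t => ((a t) ^ 2 + (b t) ^ 2 + 2 * exp (-A) * a t * b t - (c t) ^ 2) / 2)
      (fun t ht => (hc t ht).congr_deriv (by ring)) (by fun_prop) ht₀ hc₀ ht
end

section
/- Let A ∈ ℝ and let a, b, c : (ξ, η) → ℝ be differentiable functions on an open interval satisfying the SU(2) centrally flat ODE system a' = (a/2)(−a² + b² + c²), b' = (b/2)(a² − b² + c²), c' = (c/2)(a² + b² + 2e^{−A}ab − c²), with a, b, c everywhere positive. If a(t₀) = b(t₀) for some t₀ ∈ (ξ, η), then a(t) = b(t) for all t ∈ (ξ, η). -/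
/-!
The difference `u = a - b` satisfies the linear equation `u' = ((c² - (a + b)²) / 2) u`, whose
coefficient is continuous. By uniqueness for linear ODEs (Grönwall), a solution vanishing at one
point vanishes on the whole interval.
-/

open Set

theorem eqOn_zero_of_hasDerivAt_smul_self {E : Type*} [NormedAddCommGroup E] [NormedSpace ℝ E]
    {u : ℝ → E} {g : ℝ → ℝ} {ξ η t₀ : ℝ} (hg : ContinuousOn g (Ioo ξ η))
    (hu : ∀ t ∈ Ioo ξ η, HasDerivAt u (g t • u t) t) (ht₀ : t₀ ∈ Ioo ξ η) (h₀ : u t₀ = 0) :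
    EqOn u 0 (Ioo ξ η) := by
  intro t ht
  -- shrink to a compact interval, on which `g` is bounded and `x ↦ g s • x` uniformly Lipschitz
  set p := (ξ + min t₀ t) / 2
  set q := (η + max t₀ t) / 2
  have hpq : Icc p q ⊆ Ioo ξ η := fun s hs => ⟨by grind, by grind⟩
  obtain ⟨C, hC⟩ := isCompact_Icc.exists_bound_of_continuousOn (hg.mono hpq)
  have hlip : ∀ s ∈ Ioo p q, LipschitzOnWith C.toNNReal (fun x : E => g s • x) univ := by
    intro s hs
    refine ((lipschitzWith_smul (g s)).weaken ?_).lipschitzOnWith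
    rw [← NNReal.coe_le_coe, Real.coe_toNNReal']
    exact le_max_of_le_left (hC s (Ioo_subset_Icc_self hs))
  have hsub : Ioo p q ⊆ Ioo ξ η := Ioo_subset_Icc_self.trans hpq
  refine ODE_solution_unique_of_mem_Icc (s := fun _ => univ) (g := 0) hlip (t₀ := t₀)
    ⟨by grind, by grind⟩ (HasDerivAt.continuousOn fun s hs => hu s (hpq hs))
    (fun s hs => hu s (hsub hs)) (fun _ _ => mem_univ _) continuousOn_const
    (fun s _ => (hasDerivAt_const s 0).congr_deriv (smul_zero _).symm) (fun _ _ => mem_univ _) h₀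
    ⟨by grind, by grind⟩

theorem hasDerivAt_sub_of_su2System {a b c : ℝ → ℝ} {t : ℝ}
    (ha : HasDerivAt a (a t / 2 * (-(a t) ^ 2 + (b t) ^ 2 + (c t) ^ 2)) t)
    (hb : HasDerivAt b (b t / 2 * ((a t) ^ 2 - (b t) ^ 2 + (c t) ^ 2)) t) :
    HasDerivAt (fun s => a s - b s) (((c t) ^ 2 - (a t + b t) ^ 2) / 2 * (a t - b t)) t :=
  (ha.sub hb).congr_deriv (by ring)

theorem su2_system_a_eq_b_propagates_general
    (A ξ η : ℝ) (a b c : ℝ → ℝ)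
    (ha : ∀ t ∈ Set.Ioo ξ η,
      HasDerivAt a (a t / 2 * (-(a t) ^ 2 + (b t) ^ 2 + (c t) ^ 2)) t)
    (hb : ∀ t ∈ Set.Ioo ξ η,
      HasDerivAt b (b t / 2 * ((a t) ^ 2 - (b t) ^ 2 + (c t) ^ 2)) t)
    (hc : ∀ t ∈ Set.Ioo ξ η, HasDerivAt c
      (c t / 2 * ((a t) ^ 2 + (b t) ^ 2 + 2 * Real.exp (-A) * a t * b t - (c t) ^ 2)) t)
    (t₀ : ℝ) (ht₀ : t₀ ∈ Set.Ioo ξ η) (hab : a t₀ = b t₀) :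
    ∀ t ∈ Set.Ioo ξ η, a t = b t := by
  have hcont : ContinuousOn (fun s => ((c s) ^ 2 - (a s + b s) ^ 2) / 2) (Ioo ξ η) := by
    have := HasDerivAt.continuousOn ha
    have := HasDerivAt.continuousOn hb
    have := HasDerivAt.continuousOn hc
    fun_prop
  intro t ht
  exact sub_eq_zero.1 <| eqOn_zero_of_hasDerivAt_smul_self hcont
    (fun s hs => hasDerivAt_sub_of_su2System (ha s hs) (hb s hs)) ht₀ (sub_eq_zero.2 hab) ht

/-- For a positive solution of the SU(2) centrally flat ODE system on an
open interval `(ξ, η)`, if `a(t₀) = b(t₀)` at some point `t₀ ∈ (ξ, η)`, then `a = b`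
everywhere on `(ξ, η)`. -/
theorem su2_system_a_eq_b_propagates
    (A ξ η : ℝ) (a b c : ℝ → ℝ)
    (ha : ∀ t ∈ Set.Ioo ξ η,
      HasDerivAt a (a t / 2 * (-(a t) ^ 2 + (b t) ^ 2 + (c t) ^ 2)) t)
    (hb : ∀ t ∈ Set.Ioo ξ η,
      HasDerivAt b (b t / 2 * ((a t) ^ 2 - (b t) ^ 2 + (c t) ^ 2)) t)
    (hc : ∀ t ∈ Set.Ioo ξ η, HasDerivAt c
      (c t / 2 * ((a t) ^ 2 + (b t) ^ 2 + 2 * Real.exp (-A) * a t * b t - (c t) ^ 2)) t)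
    (hapos : ∀ t ∈ Set.Ioo ξ η, 0 < a t)
    (hbpos : ∀ t ∈ Set.Ioo ξ η, 0 < b t)
    (hcpos : ∀ t ∈ Set.Ioo ξ η, 0 < c t)
    (t₀ : ℝ) (ht₀ : t₀ ∈ Set.Ioo ξ η) (hab : a t₀ = b t₀) :
    ∀ t ∈ Set.Ioo ξ η, a t = b t :=
  su2_system_a_eq_b_propagates_general A ξ η a b c ha hb hc t₀ ht₀ hab
end

section
/- Let A ∈ ℝ and let a, b, c : I → ℝ be differentiable functions on an open interval satisfying the SU(2) centrally flat ODE system a' = (a/2)(−a² + b² + c²), b' = (b/2)(a² − b² + c²), c' = (c/2)(a² + b² + 2e^{−A}ab − c²). Then on I one has the identity (−a² + b² + c²)' = a⁴ − (b² − c²)² + 2e^{−A}abc². Consequently, if a, b, c are positive and −a(t)² + b(t)² + c(t)² < 0 at some point t ∈ I, then the derivative of −a² + b² + c² at t is strictly positive. -/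
/-! Differentiating `-a² + b² + c²` along the system gives
`-a²(-a² + b² + c²) + b²(a² - b² + c²) + c²(a² + b² + 2e^{-A}ab - c²)`, which expands to
`a⁴ - (b² - c²)² + 2e^{-A}abc²`. Where `b² + c² < a²` we have `(b² - c²)² ≤ (b² + c²)² < a⁴`,
and the remaining term is nonnegative as soon as `ab ≥ 0`. -/

theorem hasDerivAt_neg_sq_add_sq_add_sq {a b c : ℝ → ℝ} {t κ : ℝ}
    (ha : HasDerivAt a (a t / 2 * (-(a t) ^ 2 + (b t) ^ 2 + (c t) ^ 2)) t)
    (hb : HasDerivAt b (b t / 2 * ((a t) ^ 2 - (b t) ^ 2 + (c t) ^ 2)) t)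
    (hc : HasDerivAt c (c t / 2 * ((a t) ^ 2 + (b t) ^ 2 + 2 * κ * a t * b t - (c t) ^ 2)) t) :
    HasDerivAt (fun s => -(a s) ^ 2 + (b s) ^ 2 + (c s) ^ 2)
      ((a t) ^ 4 - ((b t) ^ 2 - (c t) ^ 2) ^ 2 + 2 * κ * a t * b t * (c t) ^ 2) t :=
  ((ha.fun_pow 2).fun_neg.fun_add (hb.fun_pow 2) |>.fun_add (hc.fun_pow 2)).congr_deriv (by ring)

theorem pow_four_sub_sq_sub_sq_add_pos {a b c κ : ℝ} (hab : 0 ≤ a * b) (hκ : 0 ≤ κ)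
    (h : -a ^ 2 + b ^ 2 + c ^ 2 < 0) :
    0 < a ^ 4 - (b ^ 2 - c ^ 2) ^ 2 + 2 * κ * a * b * c ^ 2 := by
  have hsq : (b ^ 2 - c ^ 2) ^ 2 < a ^ 4 := by
    calc (b ^ 2 - c ^ 2) ^ 2 ≤ (b ^ 2 + c ^ 2) ^ 2 := by nlinarith [sq_nonneg (b * c)]
      _ < (a ^ 2) ^ 2 := by gcongr; nlinarith [sq_nonneg b, sq_nonneg c]
      _ = a ^ 4 := by ring
  have hterm : 0 ≤ 2 * κ * a * b * c ^ 2 := by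
    have := mul_nonneg (mul_nonneg hκ hab) (sq_nonneg c)
    linarith
  linarith

theorem su2_system_deriv_of_neg_a_sq_plus_b_sq_plus_c_sq_general
    (A : ℝ) (I : Set ℝ)
    (a b c : ℝ → ℝ)
    (ha : ∀ t ∈ I, HasDerivAt a (a t / 2 * (-(a t) ^ 2 + (b t) ^ 2 + (c t) ^ 2)) t)
    (hb : ∀ t ∈ I, HasDerivAt b (b t / 2 * ((a t) ^ 2 - (b t) ^ 2 + (c t) ^ 2)) t)
    (hc : ∀ t ∈ I, HasDerivAt c
      (c t / 2 * ((a t) ^ 2 + (b t) ^ 2 + 2 * Real.exp (-A) * a t * b t - (c t) ^ 2)) t) :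
    (∀ t ∈ I, HasDerivAt (fun s => -(a s) ^ 2 + (b s) ^ 2 + (c s) ^ 2)
      ((a t) ^ 4 - ((b t) ^ 2 - (c t) ^ 2) ^ 2
        + 2 * Real.exp (-A) * a t * b t * (c t) ^ 2) t) ∧
    ((∀ t ∈ I, 0 < a t) → (∀ t ∈ I, 0 < b t) → (∀ t ∈ I, 0 < c t) →
      ∀ t ∈ I, -(a t) ^ 2 + (b t) ^ 2 + (c t) ^ 2 < 0 →
        0 < (a t) ^ 4 - ((b t) ^ 2 - (c t) ^ 2) ^ 2
          + 2 * Real.exp (-A) * a t * b t * (c t) ^ 2) :=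
  ⟨fun t ht => hasDerivAt_neg_sq_add_sq_add_sq (ha t ht) (hb t ht) (hc t ht),
    fun hapos hbpos _ t ht hneg => pow_four_sub_sq_sub_sq_add_pos
      (mul_pos (hapos t ht) (hbpos t ht)).le (Real.exp_pos _).le hneg⟩

/-- For the SU(2) centrally flat ODE system on an open interval `I`,
`(−a² + b² + c²)' = a⁴ − (b² − c²)² + 2e^(−A)abc²`; consequently, for positive
solutions, wherever `−a² + b² + c² < 0`, its derivative is strictly positive. -/
theorem su2_system_deriv_of_neg_a_sq_plus_b_sq_plus_c_sq
    (A : ℝ) (I : Set ℝ) (hIopen : IsOpen I) (hIconn : I.OrdConnected)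
    (a b c : ℝ → ℝ)
    (ha : ∀ t ∈ I, HasDerivAt a (a t / 2 * (-(a t) ^ 2 + (b t) ^ 2 + (c t) ^ 2)) t)
    (hb : ∀ t ∈ I, HasDerivAt b (b t / 2 * ((a t) ^ 2 - (b t) ^ 2 + (c t) ^ 2)) t)
    (hc : ∀ t ∈ I, HasDerivAt c
      (c t / 2 * ((a t) ^ 2 + (b t) ^ 2 + 2 * Real.exp (-A) * a t * b t - (c t) ^ 2)) t) :
    (∀ t ∈ I, HasDerivAt (fun s => -(a s) ^ 2 + (b s) ^ 2 + (c s) ^ 2)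
      ((a t) ^ 4 - ((b t) ^ 2 - (c t) ^ 2) ^ 2
        + 2 * Real.exp (-A) * a t * b t * (c t) ^ 2) t) ∧
    ((∀ t ∈ I, 0 < a t) → (∀ t ∈ I, 0 < b t) → (∀ t ∈ I, 0 < c t) →
      ∀ t ∈ I, -(a t) ^ 2 + (b t) ^ 2 + (c t) ^ 2 < 0 →
        0 < (a t) ^ 4 - ((b t) ^ 2 - (c t) ^ 2) ^ 2
          + 2 * Real.exp (-A) * a t * b t * (c t) ^ 2) :=
  su2_system_deriv_of_neg_a_sq_plus_b_sq_plus_c_sq_general A I a b c ha hb hc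
end

section
/- Let A ∈ ℝ and let a, b, c : I → ℝ be differentiable functions on an open interval satisfying the SU(2) centrally flat ODE system a' = (a/2)(−a² + b² + c²), b' = (b/2)(a² − b² + c²), c' = (c/2)(a² + b² + 2e^{−A}ab − c²). Then on I one has the identity (a² + b² + 2e^{−A}ab − c²)' = c⁴ − (a² − b²)². Consequently, if a, b, c are positive and a(t)² + b(t)² + 2e^{−A}a(t)b(t) − c(t)² < 0 at some point t ∈ I, then the derivative of a² + b² + 2e^{−A}ab − c² at t is strictly positive. -/
/-! Differentiating `a² + b² + 2k·ab − c²` along the system, the terms `2k·abc²` coming from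
`(ab)'` and from `c'` cancel, which leaves `c⁴ − (a² − b²)²` for every constant `k`. When
`k·ab ≥ 0` and the quantity is negative, `c² > a² + b²`, so both factors of
`c⁴ − (a² − b²)² = (c² − a² + b²)(c² + a² − b²)` are positive. -/

theorem hasDerivAt_centrallyFlat_quantity {a b c : ℝ → ℝ} (k t : ℝ)
    (ha : HasDerivAt a (a t / 2 * (-(a t) ^ 2 + (b t) ^ 2 + (c t) ^ 2)) t)
    (hb : HasDerivAt b (b t / 2 * ((a t) ^ 2 - (b t) ^ 2 + (c t) ^ 2)) t)
    (hc : HasDerivAt c (c t / 2 * ((a t) ^ 2 + (b t) ^ 2 + 2 * k * a t * b t - (c t) ^ 2)) t) :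
    HasDerivAt (fun s => (a s) ^ 2 + (b s) ^ 2 + 2 * k * a s * b s - (c s) ^ 2)
      ((c t) ^ 4 - ((a t) ^ 2 - (b t) ^ 2) ^ 2) t := by
  have h := (((ha.pow 2).add (hb.pow 2)).add
    (((hasDerivAt_const t (2 * k)).mul ha).mul hb)).sub (hc.pow 2)
  refine h.congr_deriv ?_
  simp only [Pi.mul_apply]
  ring

theorem sq_sub_sq_sq_lt_pow_four {a b c k : ℝ} (hkab : 0 ≤ k * a * b)
    (h : a ^ 2 + b ^ 2 + 2 * k * a * b - c ^ 2 < 0) : (a ^ 2 - b ^ 2) ^ 2 < c ^ 4 := by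
  have hfactor : c ^ 4 - (a ^ 2 - b ^ 2) ^ 2 = (c ^ 2 - a ^ 2 + b ^ 2) * (c ^ 2 + a ^ 2 - b ^ 2) := by
    ring
  have hpos : 0 < (c ^ 2 - a ^ 2 + b ^ 2) * (c ^ 2 + a ^ 2 - b ^ 2) :=
    mul_pos (by nlinarith [sq_nonneg b]) (by nlinarith [sq_nonneg a])
  linarith

theorem su2_system_deriv_of_c_prime_quantity_general
    (A : ℝ) (I : Set ℝ)
    (a b c : ℝ → ℝ)
    (ha : ∀ t ∈ I, HasDerivAt a (a t / 2 * (-(a t) ^ 2 + (b t) ^ 2 + (c t) ^ 2)) t)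
    (hb : ∀ t ∈ I, HasDerivAt b (b t / 2 * ((a t) ^ 2 - (b t) ^ 2 + (c t) ^ 2)) t)
    (hc : ∀ t ∈ I, HasDerivAt c
      (c t / 2 * ((a t) ^ 2 + (b t) ^ 2 + 2 * Real.exp (-A) * a t * b t - (c t) ^ 2)) t) :
    (∀ t ∈ I, HasDerivAt
      (fun s => (a s) ^ 2 + (b s) ^ 2 + 2 * Real.exp (-A) * a s * b s - (c s) ^ 2)
      ((c t) ^ 4 - ((a t) ^ 2 - (b t) ^ 2) ^ 2) t) ∧
    ((∀ t ∈ I, 0 < a t) → (∀ t ∈ I, 0 < b t) → (∀ t ∈ I, 0 < c t) →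
      ∀ t ∈ I, (a t) ^ 2 + (b t) ^ 2 + 2 * Real.exp (-A) * a t * b t - (c t) ^ 2 < 0 →
        0 < (c t) ^ 4 - ((a t) ^ 2 - (b t) ^ 2) ^ 2) := by
  refine ⟨fun t ht => hasDerivAt_centrallyFlat_quantity _ t (ha t ht) (hb t ht) (hc t ht), ?_⟩
  intro hpa hpb _ t ht hneg
  have hkab : 0 ≤ Real.exp (-A) * a t * b t :=
    (mul_pos (mul_pos (Real.exp_pos _) (hpa t ht)) (hpb t ht)).le
  exact sub_pos.2 (sq_sub_sq_sq_lt_pow_four hkab hneg)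

/-- For the SU(2) centrally flat ODE system on an open interval `I`,
`(a² + b² + 2e^(−A)ab − c²)' = c⁴ − (a² − b²)²`; consequently, for positive solutions,
wherever `a² + b² + 2e^(−A)ab − c² < 0`, its derivative is strictly positive. -/
theorem su2_system_deriv_of_c_prime_quantity
    (A : ℝ) (I : Set ℝ) (hIopen : IsOpen I) (hIconn : I.OrdConnected)
    (a b c : ℝ → ℝ)
    (ha : ∀ t ∈ I, HasDerivAt a (a t / 2 * (-(a t) ^ 2 + (b t) ^ 2 + (c t) ^ 2)) t)
    (hb : ∀ t ∈ I, HasDerivAt b (b t / 2 * ((a t) ^ 2 - (b t) ^ 2 + (c t) ^ 2)) t)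
    (hc : ∀ t ∈ I, HasDerivAt c
      (c t / 2 * ((a t) ^ 2 + (b t) ^ 2 + 2 * Real.exp (-A) * a t * b t - (c t) ^ 2)) t) :
    (∀ t ∈ I, HasDerivAt
      (fun s => (a s) ^ 2 + (b s) ^ 2 + 2 * Real.exp (-A) * a s * b s - (c s) ^ 2)
      ((c t) ^ 4 - ((a t) ^ 2 - (b t) ^ 2) ^ 2) t) ∧
    ((∀ t ∈ I, 0 < a t) → (∀ t ∈ I, 0 < b t) → (∀ t ∈ I, 0 < c t) →
      ∀ t ∈ I, (a t) ^ 2 + (b t) ^ 2 + 2 * Real.exp (-A) * a t * b t - (c t) ^ 2 < 0 →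
        0 < (c t) ^ 4 - ((a t) ^ 2 - (b t) ^ 2) ^ 2) :=
  su2_system_deriv_of_c_prime_quantity_general A I a b c ha hb hc
end

section
/- Let A ∈ ℝ and let a, b, c : (ξ, η) → ℝ, with ξ finite, be a solution of the SU(2) centrally flat ODE system a' = (a/2)(−a² + b² + c²), b' = (b/2)(a² − b² + c²), c' = (c/2)(a² + b² + 2e^{−A}ab − c²), with a, b, c everywhere positive and a ≥ b on (ξ, η). Assume the solution is maximal, in the sense that it does not extend to a solution of the same system on any open interval strictly containing (ξ, η). Then b(t) → 0 as t → ξ from the right. -/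
/-- The SU(2) centrally flat ODE system with parameter `A` on a set `J`:
`a' = (a/2)(−a² + b² + c²)`, `b' = (b/2)(a² − b² + c²)`,
`c' = (c/2)(a² + b² + 2e^(−A)ab − c²)`. -/
def SU2CentrallyFlatSystem (A : ℝ) (a b c : ℝ → ℝ) (J : Set ℝ) : Prop :=
  (∀ t ∈ J, HasDerivAt a (a t / 2 * (-(a t) ^ 2 + (b t) ^ 2 + (c t) ^ 2)) t) ∧
  (∀ t ∈ J, HasDerivAt b (b t / 2 * ((a t) ^ 2 - (b t) ^ 2 + (c t) ^ 2)) t) ∧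
  (∀ t ∈ J, HasDerivAt c
    (c t / 2 * ((a t) ^ 2 + (b t) ^ 2 + 2 * Real.exp (-A) * a t * b t - (c t) ^ 2)) t)

/-- A solution of the SU(2) centrally flat ODE system on an open interval `I` is maximal
if it does not extend to a solution of the same system on any open interval strictly
containing `I`. -/
def SU2MaximalSolution (A : ℝ) (a b c : ℝ → ℝ) (I : Set ℝ) : Prop :=
  SU2CentrallyFlatSystem A a b c I ∧
  ∀ J : Set ℝ, IsOpen J → J.OrdConnected → I ⊆ J → I ≠ J →
    ¬ ∃ a' b' c' : ℝ → ℝ, SU2CentrallyFlatSystem A a' b' c' J ∧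
      Set.EqOn a' a I ∧ Set.EqOn b' b I ∧ Set.EqOn c' c I

/-!
Since `0 < b ≤ a`, `b' ≥ 0`, so `b` has a limit `L ≥ 0` at `ξ⁺`. Put `u = 1 / c²`; the third
equation gives `u' = 1 - (a² + b² + 2e^{-A}ab) u ≤ 1`, so `u(t) - t` is nonincreasing.

If `c` is unbounded near `ξ`, then `u` takes arbitrarily small values near `ξ`, and monotonicity of
`u(t) - t` forces `u(t) ≤ t - ξ`, i.e. `c(t)² ≥ 1 / (t - ξ)`. Then `b² / (t - ξ)` is nondecreasing,
so `b(t)² = O(t - ξ)` and `L = 0`.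

If `c` is bounded near `ξ` and `L > 0`, then `(ab)' = abc² ≥ 0` gives `a ≤ a(t₀)b(t₀) / L` on
`(ξ, t₀)`, so the solution stays in a compact set near `ξ`. Its derivative is then bounded, so it
converges at `ξ⁺`, and Picard–Lindelöf continues it beyond `ξ`, contradicting maximality.
-/

open Set Filter Function Real
open scoped Topology NNReal

section Order

variable {α : Type*} [LinearOrder α] {I : Set α} {ξ T : α}

theorem Set.OrdConnected.Ioo_subset_of_isGLB (hI : I.OrdConnected) (hξ : IsGLB I ξ)
    (hT : T ∈ I) : Ioo ξ T ⊆ I := fun _ hs ↦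
  let ⟨_, hr, _, hrs⟩ := hξ.exists_between hs.1
  hI.out hr hT ⟨hrs.le, hs.2.le⟩

theorem IsOpen.subset_Ioi_of_isGLB [TopologicalSpace α] [OrderTopology α] [DenselyOrdered α]
    [NoMinOrder α] (hI : IsOpen I) (hξ : IsGLB I ξ) : I ⊆ Ioi ξ := by
  intro t ht
  refine (hξ.1 ht).lt_of_ne ?_
  rintro rfl
  obtain ⟨s, hsξ, hs⟩ := (show ∀ᶠ s in 𝓝 ξ, s ∈ I from hI.mem_nhds ht).exists_lt
  exact (hξ.1 hs).not_gt hsξ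

end Order

theorem monotoneOn_Ioo_of_hasDerivAt_nonneg {f f' : ℝ → ℝ} {p q : ℝ}
    (hf : ∀ t ∈ Ioo p q, HasDerivAt f (f' t) t) (hf' : ∀ t ∈ Ioo p q, 0 ≤ f' t) :
    MonotoneOn f (Ioo p q) :=
  monotoneOn_of_hasDerivWithinAt_nonneg (convex_Ioo p q)
    (fun t ht ↦ (hf t ht).continuousAt.continuousWithinAt)
    (by simpa only [interior_Ioo] using fun t ht ↦ (hf t ht).hasDerivWithinAt)
    (by simpa only [interior_Ioo] using hf')

theorem antitoneOn_Ioo_of_hasDerivAt_nonpos {f f' : ℝ → ℝ} {p q : ℝ}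
    (hf : ∀ t ∈ Ioo p q, HasDerivAt f (f' t) t) (hf' : ∀ t ∈ Ioo p q, f' t ≤ 0) :
    AntitoneOn f (Ioo p q) :=
  antitoneOn_of_hasDerivWithinAt_nonpos (convex_Ioo p q)
    (fun t ht ↦ (hf t ht).continuousAt.continuousWithinAt)
    (by simpa only [interior_Ioo] using fun t ht ↦ (hf t ht).hasDerivWithinAt)
    (by simpa only [interior_Ioo] using hf')

section AutonomousODE

variable {E : Type*} [NormedAddCommGroup E] [NormedSpace ℝ E] {F : E → E} {x : ℝ → E}
  {ξ : ℝ} {x₀ : E}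

theorem exists_tendsto_nhdsGT_of_eventually_mem_isCompact [CompleteSpace E] {K : Set E}
    (hK : IsCompact K) (hF : ContinuousOn F K)
    (hx : ∀ᶠ t in 𝓝[>] ξ, HasDerivAt x (F (x t)) t ∧ x t ∈ K) :
    ∃ x₀, Tendsto x (𝓝[>] ξ) (𝓝 x₀) := by
  obtain ⟨C, hC⟩ := hK.exists_bound_of_continuousOn hF
  obtain ⟨d, hξd, hd⟩ := mem_nhdsGT_iff_exists_Ioo_subset.1 hx
  have hlip : LipschitzOnWith C.toNNReal x (Ioo ξ d) :=
    (convex_Ioo ξ d).lipschitzOnWith_of_nnnorm_hasDerivWithin_le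
      (fun t ht ↦ (hd ht).1.hasDerivWithinAt) fun t ht ↦ by
        rw [← NNReal.coe_le_coe, coe_nnnorm]
        exact (hC _ (hd ht).2).trans (le_coe_toNNReal C)
  have hcauchy : Cauchy (map x (𝓝[>] ξ)) :=
    (cauchy_nhds.mono nhdsWithin_le_nhds).map_of_le hlip.uniformContinuousOn
      (le_principal_iff.2 (Ioo_mem_nhdsGT hξd))
  exact cauchy_map_iff_exists_tendsto.1 hcauchy

theorem hasDerivWithinAt_update_Ici_of_tendsto (hF : ContinuousAt F x₀)
    (hx : ∀ᶠ t in 𝓝[>] ξ, HasDerivAt x (F (x t)) t) (hlim : Tendsto x (𝓝[>] ξ) (𝓝 x₀)) :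
    HasDerivWithinAt (update x ξ x₀) (F x₀) (Ici ξ) ξ := by
  obtain ⟨d, hξd, hd⟩ := mem_nhdsGT_iff_exists_Ioo_subset.1 hx
  have hupd : ∀ t ∈ Ioo ξ d, HasDerivAt (update x ξ x₀) (F (x t)) t := fun t ht ↦
    (hd ht).congr_of_eventuallyEq <|
      eventually_of_mem (Ioi_mem_nhds ht.1) fun s hs ↦ update_of_ne (ne_of_gt hs) _ _
  refine hasDerivWithinAt_Ici_of_tendsto_deriv (s := Ioo ξ d)
    (fun t ht ↦ (hupd t ht).differentiableAt.differentiableWithinAt) ?_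
    (Ioo_mem_nhdsGT hξd) ?_
  · rw [ContinuousWithinAt, update_self]
    refine (hlim.mono_left (nhdsWithin_mono _ Ioo_subset_Ioi_self)).congr' ?_
    exact eventually_nhdsWithin_of_forall fun t ht ↦ (update_of_ne (ne_of_gt ht.1) _ _).symm
  · refine (hF.tendsto.comp hlim).congr' ?_
    filter_upwards [Ioo_mem_nhdsGT hξd] with t ht using (hupd t ht).deriv.symm

/- Extended by its limit, `x` solves the ODE on `[ξ, t]` up to the endpoint `ξ`, so that
uniqueness with initial time `ξ` applies. -/
theorem eqOn_Ioo_of_tendsto_nhdsGT {y : ℝ → E} {s : Set E} {K : ℝ≥0} {d : ℝ}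
    (hlip : LipschitzOnWith K F s) (hF : ContinuousAt F x₀)
    (hx : ∀ t ∈ Ioo ξ d, HasDerivAt x (F (x t)) t ∧ x t ∈ s)
    (hlim : Tendsto x (𝓝[>] ξ) (𝓝 x₀))
    (hy : ∀ t ∈ Ico ξ d, HasDerivAt y (F (y t)) t ∧ y t ∈ s) (hy₀ : y ξ = x₀) :
    EqOn x y (Ioo ξ d) := by
  intro t ht
  have hupd : ∀ u ∈ Ioo ξ d, update x ξ x₀ u = x u := fun u hu ↦
    update_of_ne (ne_of_gt hu.1) _ _
  have hupd' : ∀ u ∈ Ioo ξ d, HasDerivAt (update x ξ x₀) (F (update x ξ x₀ u)) u :=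
    fun u hu ↦ by
      rw [hupd u hu]
      exact (hx u hu).1.congr_of_eventuallyEq <| eventually_of_mem (Ioo_mem_nhds hu.1 hu.2) hupd
  have hupdξ : HasDerivWithinAt (update x ξ x₀) (F (update x ξ x₀ ξ)) (Ici ξ) ξ := by
    rw [update_self]
    exact hasDerivWithinAt_update_Ici_of_tendsto hF
      (eventually_of_mem (Ioo_mem_nhdsGT (ht.1.trans ht.2)) fun u hu ↦ (hx u hu).1) hlim
  have hIcc : ∀ u ∈ Icc ξ t, u ≠ ξ → u ∈ Ioo ξ d := fun u hu hne ↦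
    ⟨lt_of_le_of_ne hu.1 hne.symm, hu.2.trans_lt ht.2⟩
  have hIco : Icc ξ t ⊆ Ico ξ d := fun u hu ↦ ⟨hu.1, hu.2.trans_lt ht.2⟩
  have heq := ODE_solution_unique_of_mem_Icc_right (v := fun _ ↦ F) (s := fun _ ↦ s)
    (fun _ _ ↦ hlip) (f := update x ξ x₀) (g := y) ?_ ?_ ?_
    (fun u hu ↦ (hy u (hIco hu)).1.continuousAt.continuousWithinAt)
    (fun u hu ↦ (hy u (hIco (Ico_subset_Icc_self hu))).1.hasDerivWithinAt)
    (fun u hu ↦ (hy u (hIco (Ico_subset_Icc_self hu))).2) (by rw [update_self, hy₀])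
    (right_mem_Icc.2 ht.1.le)
  · rwa [hupd t ht] at heq
  · intro u hu
    rcases eq_or_ne u ξ with rfl | hne
    · exact hupdξ.continuousWithinAt.mono Icc_subset_Ici_self
    · exact (hupd' u (hIcc u hu hne)).continuousAt.continuousWithinAt
  · intro u hu
    rcases eq_or_ne u ξ with rfl | hne
    · exact hupdξ
    · exact (hupd' u (hIcc u (Ico_subset_Icc_self hu) hne)).hasDerivWithinAt
  · intro u hu
    rcases eq_or_ne u ξ with rfl | hne
    · rw [update_self, ← hy₀]
      exact (hy u (hIco (Ico_subset_Icc_self hu))).2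
    · rw [hupd u (hIcc u (Ico_subset_Icc_self hu) hne)]
      exact (hx u (hIcc u (Ico_subset_Icc_self hu) hne)).2

theorem exists_hasDerivAt_eqOn_of_tendsto_nhdsGT [CompleteSpace E]
    (hF : ContDiffAt ℝ 1 F x₀) (hx : ∀ᶠ t in 𝓝[>] ξ, HasDerivAt x (F (x t)) t)
    (hlim : Tendsto x (𝓝[>] ξ) (𝓝 x₀)) :
    ∃ ε > 0, ∃ y : ℝ → E, (∀ t ∈ Ioo (ξ - ε) (ξ + ε), HasDerivAt y (F (y t)) t) ∧
      EqOn y x (Ioo ξ (ξ + ε)) := by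
  obtain ⟨y, hy₀, ε₁, hε₁, hy⟩ :=
    hF.exists_forall_mem_closedBall_exists_eq_forall_mem_Ioo_hasDerivAt₀ ξ
  obtain ⟨K, s, hs, hlip⟩ := hF.exists_lipschitzOnWith
  have hyξ : ∀ᶠ t in 𝓝 ξ, HasDerivAt y (F (y t)) t ∧ y t ∈ s := by
    have hycont : ContinuousAt y ξ := (hy ξ ⟨by linarith, by linarith⟩).continuousAt
    exact inter_mem (eventually_of_mem (Ioo_mem_nhds (by linarith) (by linarith)) hy)
      (hycont.preimage_mem_nhds (hy₀ ▸ hs))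
  obtain ⟨ε₂, hε₂, hball⟩ := Metric.eventually_nhds_iff_ball.1 hyξ
  rw [Real.ball_eq_Ioo] at hball
  obtain ⟨d, hξd, hd⟩ := mem_nhdsGT_iff_exists_Ioo_subset.1 (hx.and (hlim hs))
  have hεε₂ : min ε₂ (d - ξ) ≤ ε₂ := min_le_left _ _
  have hεd : min ε₂ (d - ξ) ≤ d - ξ := min_le_right _ _
  refine ⟨min ε₂ (d - ξ), lt_min hε₂ (sub_pos.2 hξd), y,
    fun t ht ↦ (hball t ⟨by linarith [ht.1], by linarith [ht.2]⟩).1, ?_⟩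
  exact (eqOn_Ioo_of_tendsto_nhdsGT hlip hF.continuousAt
    (fun t ht ↦ hd ⟨ht.1, by linarith [ht.2]⟩) hlim
    (fun t ht ↦ hball t ⟨by linarith [ht.1], by linarith [ht.2]⟩) hy₀).symm

theorem exists_hasDerivAt_union_of_tendsto_nhdsGT [CompleteSpace E] {I : Set ℝ}
    (hF : ContDiffAt ℝ 1 F x₀) (hIξ : I ⊆ Ioi ξ) (hI : I ∈ 𝓝[>] ξ)
    (hx : ∀ t ∈ I, HasDerivAt x (F (x t)) t) (hlim : Tendsto x (𝓝[>] ξ) (𝓝 x₀)) :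
    ∃ ε > 0, ∃ z : ℝ → E,
      (∀ t ∈ I ∪ Ioo (ξ - ε) (ξ + ε), HasDerivAt z (F (z t)) t) ∧ EqOn z x I := by
  obtain ⟨ε, hε, y, hy, hyx⟩ :=
    exists_hasDerivAt_eqOn_of_tendsto_nhdsGT hF (eventually_of_mem hI hx) hlim
  have hzx : EqOn ((Ioi ξ).piecewise x y) x (Ioi ξ) := fun t ht ↦
    piecewise_eq_of_mem _ _ _ ht
  have hzy : EqOn ((Ioi ξ).piecewise x y) y (Ioo (ξ - ε) (ξ + ε)) := fun t ht ↦ by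
    by_cases hξt : t ∈ Ioi ξ
    · rw [hzx hξt, hyx ⟨hξt, ht.2⟩]
    · exact piecewise_eq_of_notMem _ _ _ hξt
  refine ⟨ε, hε, (Ioi ξ).piecewise x y, ?_, hzx.mono hIξ⟩
  rintro t (ht | ht)
  · rw [hzx (hIξ ht)]
    exact (hx t ht).congr_of_eventuallyEq (eventually_of_mem (Ioi_mem_nhds (hIξ ht)) hzx)
  · rw [hzy ht]
    exact (hy t ht).congr_of_eventuallyEq (eventually_of_mem (Ioo_mem_nhds ht.1 ht.2) hzy)

end AutonomousODE

section RealFunctions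

variable {ξ T : ℝ}

theorem MonotoneOn.tendsto_nhdsGT_zero_or_exists_pos_le {f : ℝ → ℝ} (hξT : ξ < T)
    (hf : MonotoneOn f (Ioo ξ T)) (hf₀ : ∀ t ∈ Ioo ξ T, 0 ≤ f t) :
    Tendsto f (𝓝[>] ξ) (𝓝 0) ∨ ∃ L > 0, ∀ t ∈ Ioo ξ T, L ≤ f t := by
  have hbdd : BddBelow (f '' Ioo ξ T) := ⟨0, by rintro _ ⟨t, ht, rfl⟩; exact hf₀ t ht⟩
  have hle : ∀ t ∈ Ioo ξ T, sInf (f '' Ioo ξ T) ≤ f t := fun t ht ↦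
    csInf_le hbdd (mem_image_of_mem f ht)
  have hnonneg : 0 ≤ sInf (f '' Ioo ξ T) :=
    le_csInf ((nonempty_Ioo.2 hξT).image f) (by rintro _ ⟨t, ht, rfl⟩; exact hf₀ t ht)
  rcases hnonneg.eq_or_lt with h | h
  · exact Or.inl (h ▸ hf.tendsto_nhdsWithin_Ioo_right (nonempty_Ioo.2 hξT) hbdd)
  · exact Or.inr ⟨_, h, hle⟩

theorem le_sub_of_antitoneOn_sub_of_frequently_lt {u : ℝ → ℝ}
    (hu : AntitoneOn (fun t ↦ u t - t) (Ioo ξ T))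
    (hsmall : ∀ ε > 0, ∃ᶠ t in 𝓝[>] ξ, u t < ε) :
    ∀ s ∈ Ioo ξ T, u s ≤ s - ξ := by
  intro s hs
  refine le_of_forall_pos_le_add fun ε hε ↦ ?_
  obtain ⟨t, hut, hξt, hts⟩ := ((hsmall ε hε).and_eventually (Ioo_mem_nhdsGT hs.1)).exists
  have hmono : u s - s ≤ u t - t := hu ⟨hξt, hts.trans hs.2⟩ hs hts.le
  linarith

theorem tendsto_nhdsGT_zero_of_monotoneOn_sq_div {f : ℝ → ℝ} (hξT : ξ < T)
    (hf₀ : ∀ t ∈ Ioo ξ T, 0 ≤ f t)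
    (hf : MonotoneOn (fun t ↦ f t ^ 2 / (t - ξ)) (Ioo ξ T)) :
    Tendsto f (𝓝[>] ξ) (𝓝 0) := by
  obtain ⟨t₀, ht₀⟩ : ∃ t₀, t₀ ∈ Ioo ξ T := exists_between hξT
  set K := f t₀ ^ 2 / (t₀ - ξ)
  have hbound : ∀ t ∈ Ioo ξ t₀, f t ≤ √(K * (t - ξ)) := fun t ht ↦ by
    have hle : f t ^ 2 / (t - ξ) ≤ K := hf ⟨ht.1, ht.2.trans ht₀.2⟩ ht₀ ht.2.le
    rw [div_le_iff₀ (sub_pos.2 ht.1)] at hle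
    exact Real.le_sqrt_of_sq_le (by linarith)
  have hsqrt : Tendsto (fun t ↦ √(K * (t - ξ))) (𝓝[>] ξ) (𝓝 0) := by
    have hcont : Continuous fun t ↦ √(K * (t - ξ)) := by fun_prop
    simpa using (hcont.tendsto ξ).mono_left nhdsWithin_le_nhds
  refine tendsto_of_tendsto_of_tendsto_of_le_of_le' tendsto_const_nhds hsqrt ?_ ?_
  · filter_upwards [Ioo_mem_nhdsGT hξT] with t ht using hf₀ t ht
  · filter_upwards [Ioo_mem_nhdsGT ht₀.1] with t ht using hbound t ht

end RealFunctions

noncomputable def su2Field (A : ℝ) (p : ℝ × ℝ × ℝ) : ℝ × ℝ × ℝ :=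
  (p.1 / 2 * (-p.1 ^ 2 + p.2.1 ^ 2 + p.2.2 ^ 2),
   p.2.1 / 2 * (p.1 ^ 2 - p.2.1 ^ 2 + p.2.2 ^ 2),
   p.2.2 / 2 * (p.1 ^ 2 + p.2.1 ^ 2 + 2 * exp (-A) * p.1 * p.2.1 - p.2.2 ^ 2))

theorem contDiff_su2Field (A : ℝ) : ContDiff ℝ 1 (su2Field A) := by
  unfold su2Field
  fun_prop

section SU2

variable {A ξ T : ℝ} {a b c : ℝ → ℝ}

theorem su2CentrallyFlatSystem_iff {J : Set ℝ} :
    SU2CentrallyFlatSystem A a b c J ↔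
      ∀ t ∈ J, HasDerivAt (fun s ↦ (a s, b s, c s)) (su2Field A (a t, b t, c t)) t := by
  refine ⟨fun ⟨ha, hb, hc⟩ t ht ↦ (ha t ht).prodMk ((hb t ht).prodMk (hc t ht)),
    fun h ↦ ⟨fun t ht ↦ ?_, fun t ht ↦ ?_, fun t ht ↦ ?_⟩⟩
  · exact hasFDerivAt_fst.comp_hasDerivAt t (h t ht)
  · exact hasFDerivAt_fst.comp_hasDerivAt t (hasFDerivAt_snd.comp_hasDerivAt t (h t ht))
  · exact hasFDerivAt_snd.comp_hasDerivAt t (hasFDerivAt_snd.comp_hasDerivAt t (h t ht))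

theorem SU2CentrallyFlatSystem.mono {J J' : Set ℝ} (h : SU2CentrallyFlatSystem A a b c J)
    (hJ : J' ⊆ J) : SU2CentrallyFlatSystem A a b c J' :=
  ⟨fun t ht ↦ h.1 t (hJ ht), fun t ht ↦ h.2.1 t (hJ ht), fun t ht ↦ h.2.2 t (hJ ht)⟩

theorem su2_monotoneOn_b (hsys : SU2CentrallyFlatSystem A a b c (Ioo ξ T))
    (hb₀ : ∀ t ∈ Ioo ξ T, 0 ≤ b t) (hba : ∀ t ∈ Ioo ξ T, b t ≤ a t) :
    MonotoneOn b (Ioo ξ T) :=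
  monotoneOn_Ioo_of_hasDerivAt_nonneg hsys.2.1 fun t ht ↦ by
    have hsq : b t ^ 2 ≤ a t ^ 2 := pow_le_pow_left₀ (hb₀ t ht) (hba t ht) 2
    exact mul_nonneg (div_nonneg (hb₀ t ht) zero_le_two) (by linarith [sq_nonneg (c t)])

theorem su2_monotoneOn_mul (hsys : SU2CentrallyFlatSystem A a b c (Ioo ξ T))
    (hab₀ : ∀ t ∈ Ioo ξ T, 0 ≤ a t * b t) :
    MonotoneOn (fun t ↦ a t * b t) (Ioo ξ T) :=
  monotoneOn_Ioo_of_hasDerivAt_nonneg (f' := fun t ↦ a t * b t * c t ^ 2)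
    (fun t ht ↦ ((hsys.1 t ht).mul (hsys.2.1 t ht)).congr_deriv (by ring))
    fun t ht ↦ mul_nonneg (hab₀ t ht) (sq_nonneg _)

theorem su2_antitoneOn_inv_sq_c_sub_id (hsys : SU2CentrallyFlatSystem A a b c (Ioo ξ T))
    (hab₀ : ∀ t ∈ Ioo ξ T, 0 ≤ a t * b t) (hc : ∀ t ∈ Ioo ξ T, c t ≠ 0) :
    AntitoneOn (fun t ↦ (c t ^ 2)⁻¹ - t) (Ioo ξ T) := by
  refine antitoneOn_Ioo_of_hasDerivAt_nonpos
    (f' := fun t ↦ -((a t ^ 2 + b t ^ 2 + 2 * exp (-A) * a t * b t) / c t ^ 2))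
    (fun t ht ↦ ?_) fun t ht ↦ ?_
  · have hct := hc t ht
    refine (((hsys.2.2 t ht).pow 2).inv (pow_ne_zero 2 hct)).sub (hasDerivAt_id t)
      |>.congr_deriv ?_
    simp only [Pi.pow_apply]
    field_simp
    ring
  · have hexp := mul_nonneg (exp_pos (-A)).le (hab₀ t ht)
    have hQ : 0 ≤ a t ^ 2 + b t ^ 2 + 2 * exp (-A) * a t * b t := by
      nlinarith [sq_nonneg (a t), sq_nonneg (b t)]
    exact neg_nonpos.2 (div_nonneg hQ (sq_nonneg _))

theorem su2_monotoneOn_sq_b_div (hsys : SU2CentrallyFlatSystem A a b c (Ioo ξ T))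
    (hb₀ : ∀ t ∈ Ioo ξ T, 0 ≤ b t) (hba : ∀ t ∈ Ioo ξ T, b t ≤ a t)
    (hc : ∀ t ∈ Ioo ξ T, (t - ξ)⁻¹ ≤ c t ^ 2) :
    MonotoneOn (fun t ↦ b t ^ 2 / (t - ξ)) (Ioo ξ T) := by
  refine monotoneOn_Ioo_of_hasDerivAt_nonneg
    (f' := fun t ↦ b t ^ 2 * ((a t ^ 2 - b t ^ 2 + c t ^ 2) * (t - ξ) - 1) / (t - ξ) ^ 2)
    (fun t ht ↦ ?_) fun t ht ↦ ?_
  · have hξt : t - ξ ≠ 0 := sub_ne_zero.2 (ne_of_gt ht.1)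
    refine (((hsys.2.1 t ht).pow 2).div ((hasDerivAt_id t).sub_const ξ) hξt).congr_deriv ?_
    simp only [Pi.pow_apply, id]
    field_simp
    ring
  · have hξt : 0 < t - ξ := sub_pos.2 ht.1
    have hct : 1 ≤ c t ^ 2 * (t - ξ) := by
      rw [← inv_le_iff_one_le_mul₀ hξt]
      exact hc t ht
    have hsq : b t ^ 2 ≤ a t ^ 2 := pow_le_pow_left₀ (hb₀ t ht) (hba t ht) 2
    have hfactor : 0 ≤ (a t ^ 2 - b t ^ 2 + c t ^ 2) * (t - ξ) - 1 := by
      nlinarith [mul_nonneg (sub_nonneg.2 hsq) hξt.le]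
    exact div_nonneg (mul_nonneg (sq_nonneg _) hfactor) (sq_nonneg _)

theorem su2_tendsto_b_zero_of_frequently_lt_c (hξT : ξ < T)
    (hsys : SU2CentrallyFlatSystem A a b c (Ioo ξ T)) (hb₀ : ∀ t ∈ Ioo ξ T, 0 ≤ b t)
    (hba : ∀ t ∈ Ioo ξ T, b t ≤ a t) (hc : ∀ t ∈ Ioo ξ T, c t ≠ 0)
    (hc_unbdd : ∀ M, ∃ᶠ t in 𝓝[>] ξ, M < c t) :
    Tendsto b (𝓝[>] ξ) (𝓝 0) := by
  have hsmall : ∀ ε > 0, ∃ᶠ t in 𝓝[>] ξ, (c t ^ 2)⁻¹ < ε := fun ε hε ↦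
    (hc_unbdd (max 1 ε⁻¹)).mono fun t ht ↦ by
      have h1 : 1 < c t := (le_max_left _ _).trans_lt ht
      have h2 : ε⁻¹ < c t := (le_max_right _ _).trans_lt ht
      exact inv_lt_of_inv_lt₀ hε (h2.trans (by nlinarith))
  have hab₀ : ∀ t ∈ Ioo ξ T, 0 ≤ a t * b t := fun t ht ↦
    mul_nonneg ((hb₀ t ht).trans (hba t ht)) (hb₀ t ht)
  have hu := le_sub_of_antitoneOn_sub_of_frequently_lt
    (su2_antitoneOn_inv_sq_c_sub_id hsys hab₀ hc) hsmall
  have hc2 : ∀ t ∈ Ioo ξ T, (t - ξ)⁻¹ ≤ c t ^ 2 := fun t ht ↦ by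
    have hct := hc t ht
    exact inv_le_of_inv_le₀ (by positivity) (hu t ht)
  exact tendsto_nhdsGT_zero_of_monotoneOn_sq_div hξT hb₀
    (su2_monotoneOn_sq_b_div hsys hb₀ hba hc2)

theorem su2_exists_tendsto_of_le_b_of_le_c (hξT : ξ < T)
    (hsys : SU2CentrallyFlatSystem A a b c (Ioo ξ T)) (hba : ∀ t ∈ Ioo ξ T, b t ≤ a t)
    (hc₀ : ∀ t ∈ Ioo ξ T, 0 ≤ c t) {L M : ℝ} (hL : 0 < L)
    (hLb : ∀ t ∈ Ioo ξ T, L ≤ b t) (hcM : ∀ᶠ t in 𝓝[>] ξ, c t ≤ M) :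
    ∃ x₀, Tendsto (fun t ↦ (a t, b t, c t)) (𝓝[>] ξ) (𝓝 x₀) := by
  obtain ⟨t₀, ht₀⟩ : ∃ t₀, t₀ ∈ Ioo ξ T := exists_between hξT
  set R := a t₀ * b t₀ / L
  have hb₀ : ∀ t ∈ Ioo ξ T, 0 ≤ b t := fun t ht ↦ hL.le.trans (hLb t ht)
  have hmul := su2_monotoneOn_mul hsys fun t ht ↦
    mul_nonneg ((hb₀ t ht).trans (hba t ht)) (hb₀ t ht)
  have hK : IsCompact (Icc 0 R ×ˢ Icc 0 R ×ˢ Icc 0 M) :=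
    isCompact_Icc.prod (isCompact_Icc.prod isCompact_Icc)
  refine exists_tendsto_nhdsGT_of_eventually_mem_isCompact hK
    (contDiff_su2Field A).continuous.continuousOn ?_
  filter_upwards [Ioo_mem_nhdsGT ht₀.1, hcM] with t ht hct
  have htT : t ∈ Ioo ξ T := ⟨ht.1, ht.2.trans ht₀.2⟩
  have haR : a t ≤ R := by
    rw [le_div_iff₀ hL]
    calc a t * L ≤ a t * b t :=
          mul_le_mul_of_nonneg_left (hLb t htT) ((hb₀ t htT).trans (hba t htT))
      _ ≤ a t₀ * b t₀ := hmul htT ht₀ ht.2.le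
  exact ⟨su2CentrallyFlatSystem_iff.1 hsys t htT, ⟨(hb₀ t htT).trans (hba t htT), haR⟩,
    ⟨hb₀ t htT, (hba t htT).trans haR⟩, hc₀ t htT, hct⟩

theorem SU2MaximalSolution.not_tendsto_nhdsGT {I : Set ℝ}
    (hmax : SU2MaximalSolution A a b c I) (hIopen : IsOpen I) (hIconn : I.OrdConnected)
    (hIξ : I ⊆ Ioi ξ) (hI : I ∈ 𝓝[>] ξ) (x₀ : ℝ × ℝ × ℝ) :
    ¬ Tendsto (fun t ↦ (a t, b t, c t)) (𝓝[>] ξ) (𝓝 x₀) := by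
  intro hlim
  obtain ⟨ε, hε, z, hz, hzx⟩ := exists_hasDerivAt_union_of_tendsto_nhdsGT
    (contDiff_su2Field A).contDiffAt hIξ hI (su2CentrallyFlatSystem_iff.1 hmax.1) hlim
  have hξJ : ξ ∈ I ∪ Ioo (ξ - ε) (ξ + ε) := Or.inr ⟨by linarith, by linarith⟩
  have hmeet : (I ∩ Ioo (ξ - ε) (ξ + ε)).Nonempty := nonempty_of_mem <|
    inter_mem hI (mem_nhdsWithin_of_mem_nhds (Ioo_mem_nhds (by linarith) (by linarith)))
  refine hmax.2 _ (hIopen.union isOpen_Ioo)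
    (isPreconnected_iff_ordConnected.1 (hIconn.isPreconnected.union' hmeet isPreconnected_Ioo))
    subset_union_left (fun h ↦ lt_irrefl ξ (hIξ (by rw [h]; exact hξJ)))
    ⟨fun t ↦ (z t).1, fun t ↦ (z t).2.1, fun t ↦ (z t).2.2, su2CentrallyFlatSystem_iff.2 hz,
      fun t ht ↦ congrArg Prod.fst (hzx ht), fun t ht ↦ congrArg (·.2.1) (hzx ht),
      fun t ht ↦ congrArg (·.2.2) (hzx ht)⟩

end SU2

theorem su2_maximal_finite_left_endpoint_b_tendsto_zero_general
    (A ξ : ℝ) (I : Set ℝ) (hIopen : IsOpen I) (hIconn : I.OrdConnected)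
    (hne : I.Nonempty) (hglb : IsGLB I ξ)
    (a b c : ℝ → ℝ)
    (hmax : SU2MaximalSolution A a b c I)
    (hbpos : ∀ t ∈ I, 0 < b t) (hcpos : ∀ t ∈ I, 0 < c t)
    (hab : ∀ t ∈ I, b t ≤ a t) :
    Filter.Tendsto b (nhdsWithin ξ (Set.Ioi ξ)) (nhds 0) := by
  obtain ⟨T, hT⟩ := hne
  have hIξ := hIopen.subset_Ioi_of_isGLB hglb
  have hξT : ξ < T := hIξ hT
  have hIoo := hIconn.Ioo_subset_of_isGLB hglb hT
  have hsys := hmax.1.mono hIoo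
  have hb₀ : ∀ t ∈ Ioo ξ T, 0 ≤ b t := fun t ht ↦ (hbpos t (hIoo ht)).le
  have hba : ∀ t ∈ Ioo ξ T, b t ≤ a t := fun t ht ↦ hab t (hIoo ht)
  by_cases hc_unbdd : ∀ M, ∃ᶠ t in 𝓝[>] ξ, M < c t
  · exact su2_tendsto_b_zero_of_frequently_lt_c hξT hsys hb₀ hba
      (fun t ht ↦ (hcpos t (hIoo ht)).ne') hc_unbdd
  simp only [not_forall, not_frequently, not_lt] at hc_unbdd
  obtain ⟨M, hcM⟩ := hc_unbdd
  refine ((su2_monotoneOn_b hsys hb₀ hba).tendsto_nhdsGT_zero_or_exists_pos_le hξT hb₀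
    ).resolve_right ?_
  rintro ⟨L, hL, hLb⟩
  obtain ⟨x₀, hx₀⟩ := su2_exists_tendsto_of_le_b_of_le_c hξT hsys hba
    (fun t ht ↦ (hcpos t (hIoo ht)).le) hL hLb hcM
  exact hmax.not_tendsto_nhdsGT hIopen hIconn hIξ
    (mem_of_superset (Ioo_mem_nhdsGT hξT) hIoo) x₀ hx₀

/-- For a maximal positive solution with `a ≥ b` of the SU(2) centrally
flat system on an open interval `(ξ, η)` with finite left endpoint `ξ`, one has
`b(t) → 0` as `t → ξ⁺`. -/
theorem su2_maximal_finite_left_endpoint_b_tendsto_zero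
    (A ξ : ℝ) (I : Set ℝ) (hIopen : IsOpen I) (hIconn : I.OrdConnected)
    (hne : I.Nonempty) (hglb : IsGLB I ξ)
    (a b c : ℝ → ℝ)
    (hmax : SU2MaximalSolution A a b c I)
    (hapos : ∀ t ∈ I, 0 < a t) (hbpos : ∀ t ∈ I, 0 < b t) (hcpos : ∀ t ∈ I, 0 < c t)
    (hab : ∀ t ∈ I, b t ≤ a t) :
    Filter.Tendsto b (nhdsWithin ξ (Set.Ioi ξ)) (nhds 0) :=
  su2_maximal_finite_left_endpoint_b_tendsto_zero_general A ξ I hIopen hIconn hne hglb a b c hmax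
    hbpos hcpos hab
end

section
/- Let A ∈ ℝ and let a, b, c : (ξ, η) → ℝ, with ξ finite, be a maximal solution of the SU(2) centrally flat ODE system a' = (a/2)(−a² + b² + c²), b' = (b/2)(a² − b² + c²), c' = (c/2)(a² + b² + 2e^{−A}ab − c²), with a, b, c everywhere positive and a ≥ b on (ξ, η). Then for any t₁ ∈ (ξ, η), the integral ∫_{ξ}^{t₁} a(t)·b(t)·c(t) dt is finite. (Geometrically: the corresponding cohomogeneity one metric g = (abc)²dt² + a²σ₁² + b²σ₂² + c²σ₃² is incomplete at t = ξ.) -/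
/-!
Along a solution, `(abc)'/(abc) = a'/a + b'/b + c'/c = (a² + b² + c² + 2e^{-A}ab)/2`, so for a
positive solution `abc` is increasing. Hence on `(ξ, t₁)` it is squeezed between `0` and its
value at `t₁`, and a bounded function is integrable on a bounded interval.
-/

open Set MeasureTheory

theorem IsGLB.Ioc_subset {α : Type*} [LinearOrder α] {s : Set α} {x y : α} (hglb : IsGLB s x) (hs : s.OrdConnected)
    (hy : y ∈ s) : Ioc x y ⊆ s := by
  rintro t ⟨hxt, hty⟩
  obtain ⟨u, hu, -, hut⟩ := hglb.exists_between hxt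
  exact hs.out hu hy ⟨hut.le, hty⟩

theorem MonotoneOn.integrableOn_Ioo_of_nonneg {μ : Measure ℝ} [IsFiniteMeasureOnCompacts μ]
    {f : ℝ → ℝ} {x y : ℝ} (hf : MonotoneOn f (Ioc x y)) (hf₀ : ∀ t ∈ Ioo x y, 0 ≤ f t) :
    IntegrableOn f (Ioo x y) μ := by
  have hmono : MonotoneOn f (Ioo x y) := hf.mono Ioo_subset_Ioc_self
  refine .of_bound measure_Ioo_lt_top
    (aemeasurable_restrict_of_monotoneOn measurableSet_Ioo hmono).aestronglyMeasurable (f y) ?_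
  rw [ae_restrict_iff' measurableSet_Ioo]
  filter_upwards with t ht
  rw [Real.norm_eq_abs, abs_of_nonneg (hf₀ t ht)]
  exact hf (Ioo_subset_Ioc_self ht) ⟨ht.1.trans ht.2, le_rfl⟩ ht.2.le

namespace SU2CentrallyFlatSystem

variable {A : ℝ} {a b c : ℝ → ℝ} {J : Set ℝ}

theorem hasDerivAt_mul_mul (h : SU2CentrallyFlatSystem A a b c J) {t : ℝ} (ht : t ∈ J) :
    HasDerivAt (fun t => a t * b t * c t)
      (a t * b t * c t / 2 * (a t ^ 2 + b t ^ 2 + c t ^ 2 + 2 * Real.exp (-A) * a t * b t)) t :=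
  ((h.1 t ht).mul (h.2.1 t ht)).mul (h.2.2 t ht) |>.congr_deriv (by simp only [Pi.mul_apply]; ring)

theorem monotoneOn_mul_mul (h : SU2CentrallyFlatSystem A a b c J) (hJ : J.OrdConnected)
    (ha : ∀ t ∈ J, 0 ≤ a t) (hb : ∀ t ∈ J, 0 ≤ b t) (hc : ∀ t ∈ J, 0 ≤ c t) :
    MonotoneOn (fun t => a t * b t * c t) J := by
  have hint : interior J ⊆ J := interior_subset
  refine monotoneOn_of_hasDerivWithinAt_nonneg hJ.convex
    (fun t ht => (h.hasDerivAt_mul_mul ht).continuousAt.continuousWithinAt)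
    (fun t ht => (h.hasDerivAt_mul_mul (hint ht)).hasDerivWithinAt) fun t ht => ?_
  have := ha t (hint ht); have := hb t (hint ht); have := hc t (hint ht)
  positivity

end SU2CentrallyFlatSystem

theorem su2_maximal_finite_left_endpoint_incomplete_general
    (A ξ : ℝ) (I : Set ℝ) (hIconn : I.OrdConnected)
    (hglb : IsGLB I ξ)
    (a b c : ℝ → ℝ)
    (hmax : SU2MaximalSolution A a b c I)
    (hapos : ∀ t ∈ I, 0 < a t) (hbpos : ∀ t ∈ I, 0 < b t) (hcpos : ∀ t ∈ I, 0 < c t)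
    (t₁ : ℝ) (ht₁ : t₁ ∈ I) :
    MeasureTheory.IntegrableOn (fun t => a t * b t * c t) (Set.Ioo ξ t₁) := by
  have hsub : Ioc ξ t₁ ⊆ I := hglb.Ioc_subset hIconn ht₁
  have hmono := hmax.1.monotoneOn_mul_mul hIconn (fun t ht => (hapos t ht).le)
    (fun t ht => (hbpos t ht).le) (fun t ht => (hcpos t ht).le)
  refine (hmono.mono hsub).integrableOn_Ioo_of_nonneg fun t ht => ?_
  have ht : t ∈ I := hsub (Ioo_subset_Ioc_self ht)
  have := hapos t ht; have := hbpos t ht; have := hcpos t ht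
  positivity

/-- For a maximal positive solution with `a ≥ b` of the SU(2) centrally
flat system on an open interval `(ξ, η)` with finite left endpoint `ξ`, the integral
`∫_ξ^{t₁} a·b·c dt` is finite for any `t₁` in the interval; i.e. the corresponding
cohomogeneity one metric is incomplete at `t = ξ`. -/
theorem su2_maximal_finite_left_endpoint_incomplete
    (A ξ : ℝ) (I : Set ℝ) (hIopen : IsOpen I) (hIconn : I.OrdConnected)
    (hne : I.Nonempty) (hglb : IsGLB I ξ)
    (a b c : ℝ → ℝ)
    (hmax : SU2MaximalSolution A a b c I)
    (hapos : ∀ t ∈ I, 0 < a t) (hbpos : ∀ t ∈ I, 0 < b t) (hcpos : ∀ t ∈ I, 0 < c t)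
    (hab : ∀ t ∈ I, b t ≤ a t)
    (t₁ : ℝ) (ht₁ : t₁ ∈ I) :
    MeasureTheory.IntegrableOn (fun t => a t * b t * c t) (Set.Ioo ξ t₁) :=
  su2_maximal_finite_left_endpoint_incomplete_general A ξ I hIconn hglb a b c hmax hapos hbpos hcpos
    t₁ ht₁
end

section
/- Let A ∈ ℝ and let a, b, c : (−∞, η) → ℝ be a solution of the SU(2) centrally flat ODE system a' = (a/2)(−a² + b² + c²), b' = (b/2)(a² − b² + c²), c' = (c/2)(a² + b² + 2e^{−A}ab − c²), with a, b, c everywhere positive and a ≥ b on (−∞, η). Then either there exists q > 0 such that a(t) → q, b(t) → q, and c(t) → 0 as t → −∞, or there exists q ≥ 0 such that a(t) → q, b(t) → 0, and c(t) → q as t → −∞. -/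
/-!
Put `E = e^{-A}`, `D = a² - b² - c²` and `F = c² - a² - b² - 2Eab`. Then `a' = -aD/2`,
`c' = -cF/2`, `F' = D (D + 2c²)`, `b' ≥ 0` because `b ≤ a`, and `D' < 0` wherever `D = 0`,
so a positive value of `D` persists backwards in time.

If `D > 0` at some time, then before it `a` decreases and `c` increases as `t` grows, and the
logistic inequality `(a²)' ≤ a² (K - a²)` keeps `a` bounded. Otherwise `D ≤ 0` throughout, `a`
increases, the same inequality for `c²` keeps `c` bounded, and then the monotone bounded `F`
converges, hence so does `c² = F + a² + b² + 2Eab`. So `a`, `b`, `c` converge as `t → -∞`;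
their derivatives converge as well, hence to `0`, so the limit is an equilibrium, and the
equilibria with `0 ≤ b ≤ a`, `0 ≤ c` are `(q, q, 0)` and `(q, 0, q)`.
-/

open Set Filter Topology

section RealODE

variable {f f' : ℝ → ℝ} {t₀ : ℝ}

lemma monotoneOn_Iic_of_hasDerivAt_nonneg (hf : ∀ t ≤ t₀, HasDerivAt f (f' t) t)
    (hf' : ∀ t ≤ t₀, 0 ≤ f' t) : MonotoneOn f (Iic t₀) :=
  monotoneOn_of_hasDerivWithinAt_nonneg (convex_Iic t₀)
    (fun t ht => (hf t ht).continuousAt.continuousWithinAt)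
    (fun t ht => (hf t (interior_subset (s := Iic t₀) ht)).hasDerivWithinAt)
    (fun t ht => hf' t (interior_subset (s := Iic t₀) ht))

lemma antitoneOn_Iic_of_hasDerivAt_nonpos (hf : ∀ t ≤ t₀, HasDerivAt f (f' t) t)
    (hf' : ∀ t ≤ t₀, f' t ≤ 0) : AntitoneOn f (Iic t₀) :=
  antitoneOn_of_hasDerivWithinAt_nonpos (convex_Iic t₀)
    (fun t ht => (hf t ht).continuousAt.continuousWithinAt)
    (fun t ht => (hf t (interior_subset (s := Iic t₀) ht)).hasDerivWithinAt)
    (fun t ht => hf' t (interior_subset (s := Iic t₀) ht))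

lemma MonotoneOn.exists_tendsto_atBot {m : ℝ} (hf : MonotoneOn f (Iic t₀))
    (hm : ∀ t ≤ t₀, m ≤ f t) : ∃ L, Tendsto f atBot (𝓝 L) := by
  have hmin : ∀ t, min t t₀ ∈ Iic t₀ := fun t => min_le_right t t₀
  have hg : Monotone fun t => f (min t t₀) := fun s t hst =>
    hf (hmin s) (hmin t) (min_le_min_right t₀ hst)
  refine ⟨_, (tendsto_atBot_ciInf hg ⟨m, ?_⟩).congr' ?_⟩
  · rintro _ ⟨t, rfl⟩
    exact hm _ (hmin t)
  · filter_upwards [eventually_le_atBot t₀] with t ht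
    rw [min_eq_left ht]

lemma AntitoneOn.exists_tendsto_atBot {M : ℝ} (hf : AntitoneOn f (Iic t₀))
    (hM : ∀ t ≤ t₀, f t ≤ M) : ∃ L, Tendsto f atBot (𝓝 L) := by
  obtain ⟨L, hL⟩ := hf.neg.exists_tendsto_atBot (m := -M) fun t ht => neg_le_neg (hM t ht)
  exact ⟨-L, by simpa using hL.neg⟩

lemma lt_of_hasDerivAt_neg_at_level {L t : ℝ} (hf : ∀ s ≤ t₀, HasDerivAt f (f' s) s)
    (hL : ∀ s ≤ t₀, f s = L → f' s < 0) (ht : t ≤ t₀) (hLt : L < f t) :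
    ∀ s ≤ t, L < f s := by
  intro s hst
  by_contra! hs
  have hsub : Icc s t ⊆ Iic t₀ := fun x hx => hx.2.trans ht
  have := image_le_of_deriv_right_lt_deriv_boundary (B := fun _ => L) (B' := fun _ => 0)
    (fun x hx => (hf x (hsub hx)).continuousAt.continuousWithinAt)
    (fun x hx => (hf x (hsub (Ico_subset_Icc_self hx))).hasDerivWithinAt) hs
    (fun _ => hasDerivAt_const _ _) (fun x hx => hL x (hsub (Ico_subset_Icc_self hx)))
    ⟨hst, le_rfl⟩
  exact this.not_gt hLt

lemma exists_nonpos_of_hasDerivAt_le_neg_mul_sq {δ : ℝ} (hδ : 0 < δ)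
    (hf : ∀ t ≤ t₀, HasDerivAt f (f' t) t) (hf' : ∀ t ≤ t₀, f' t ≤ -δ * f t ^ 2) :
    ∃ t ≤ t₀, f t ≤ 0 := by
  by_contra! hpos
  -- `1 / f` grows at rate at least `δ`, so it would vanish at time `t₀ - (f t₀)⁻¹ / δ`
  have hinv : MonotoneOn (fun t => (f t)⁻¹ - δ * t) (Iic t₀) := by
    refine monotoneOn_Iic_of_hasDerivAt_nonneg
      (fun t ht => ((hf t ht).inv (hpos t ht).ne').sub ((hasDerivAt_id t).const_mul δ))
      fun t ht => ?_
    have hft := hpos t ht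
    rw [mul_one, sub_nonneg, le_div_iff₀ (by positivity)]
    linarith [hf' t ht]
  set s := t₀ - (f t₀)⁻¹ / δ
  have hs : s ≤ t₀ := sub_le_self _ (by have := hpos t₀ le_rfl; positivity)
  have := hinv hs self_mem_Iic hs
  have hfs := hpos s hs
  simp only [s, mul_sub, mul_div_cancel₀ _ hδ.ne'] at this
  linarith [inv_pos.2 hfs]

lemma le_of_hasDerivAt_le_mul_sub {M : ℝ} (hM : 0 ≤ M) (hf : ∀ t ≤ t₀, HasDerivAt f (f' t) t)
    (hpos : ∀ t ≤ t₀, 0 < f t) (hf' : ∀ t ≤ t₀, f' t ≤ f t * (M - f t)) :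
    ∀ t ≤ t₀, f t ≤ M := by
  intro t ht
  by_contra! hMt
  set L := (M + f t) / 2 with hLdef
  have hML : M < L := by linarith
  have hL : ∀ s ≤ t, L < f s := by
    refine lt_of_hasDerivAt_neg_at_level hf (fun s hs hfs => ?_) ht (by linarith)
    calc f' s ≤ f s * (M - f s) := hf' s hs
      _ < 0 := mul_neg_of_pos_of_neg (hpos s hs) (by linarith)
  have hdecay : ∀ s ≤ t, f' s ≤ -((L - M) / L) * f s ^ 2 := by
    intro s hs
    have hLs := hL s hs
    calc f' s ≤ f s * (M - f s) := hf' s (hs.trans ht)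
      _ ≤ -((L - M) / L) * f s ^ 2 := by
        rw [neg_mul, div_mul_eq_mul_div, le_neg, div_le_iff₀ (by linarith)]
        nlinarith [mul_le_mul_of_nonneg_left hLs.le hM]
  obtain ⟨s, hst, hfs⟩ := exists_nonpos_of_hasDerivAt_le_neg_mul_sq
    (div_pos (sub_pos.2 hML) (by linarith)) (fun s hs => hf s (hs.trans ht)) hdecay
  linarith [hL s hst]

lemma eq_zero_of_tendsto_of_hasDerivAt_atBot {L ℓ : ℝ}
    (hf : ∀ t ≤ t₀, HasDerivAt f (f' t) t) (hfL : Tendsto f atBot (𝓝 L))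
    (hf'ℓ : Tendsto f' atBot (𝓝 ℓ)) : ℓ = 0 := by
  have hslope : ∀ t, ∃ ξ, t ≤ t₀ → ξ ∈ Ioo (t - 1) t ∧ f' ξ = f t - f (t - 1) := by
    intro t
    by_cases ht : t ≤ t₀
    · obtain ⟨ξ, hξ, hξf⟩ := exists_hasDerivAt_eq_slope f f' (sub_one_lt t)
        (fun s hs => (hf s (hs.2.trans ht)).continuousAt.continuousWithinAt)
        (fun s hs => hf s (hs.2.le.trans ht))
      exact ⟨ξ, fun _ => ⟨hξ, by rw [hξf, sub_sub_cancel, div_one]⟩⟩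
    · exact ⟨0, fun h => absurd h ht⟩
  choose ξ hξ using hslope
  have hξ_bot : Tendsto ξ atBot atBot := by
    refine tendsto_atBot_mono' atBot ?_ tendsto_id
    filter_upwards [eventually_le_atBot t₀] with t ht
    exact (hξ t ht).1.2.le
  have hdiff : Tendsto (fun t => f t - f (t - 1)) atBot (𝓝 (L - L)) :=
    hfL.sub (hfL.comp (tendsto_atBot_add_const_right _ (-1) tendsto_id))
  refine tendsto_nhds_unique ((hf'ℓ.comp hξ_bot).congr' ?_) (sub_self L ▸ hdiff)
  filter_upwards [eventually_le_atBot t₀] with t ht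
  exact (hξ t ht).2

end RealODE

lemma tendsto_sqrt_of_tendsto_sq {α : Type*} {l : Filter α} {f : α → ℝ} {L : ℝ}
    (hf : ∀ᶠ x in l, 0 ≤ f x) (hL : Tendsto (fun x => f x ^ 2) l (𝓝 L)) :
    Tendsto f l (𝓝 √L) :=
  ((Real.continuous_sqrt.tendsto L).comp hL).congr' (hf.mono fun _ hx => Real.sqrt_sq hx)

namespace SU2

structure IsPosSolution (E η : ℝ) (a b c : ℝ → ℝ) : Prop where
  hasDerivAt_a : ∀ t < η, HasDerivAt a (a t / 2 * (-(a t) ^ 2 + b t ^ 2 + c t ^ 2)) t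
  hasDerivAt_b : ∀ t < η, HasDerivAt b (b t / 2 * (a t ^ 2 - b t ^ 2 + c t ^ 2)) t
  hasDerivAt_c : ∀ t < η,
    HasDerivAt c (c t / 2 * (a t ^ 2 + b t ^ 2 + 2 * E * a t * b t - c t ^ 2)) t
  a_pos : ∀ t < η, 0 < a t
  b_pos : ∀ t < η, 0 < b t
  c_pos : ∀ t < η, 0 < c t
  b_le_a : ∀ t < η, b t ≤ a t

def D (a b c : ℝ → ℝ) (t : ℝ) : ℝ := a t ^ 2 - b t ^ 2 - c t ^ 2

def F (E : ℝ) (a b c : ℝ → ℝ) (t : ℝ) : ℝ := c t ^ 2 - a t ^ 2 - b t ^ 2 - 2 * E * a t * b t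

def IsEquilibrium (E α β γ : ℝ) : Prop :=
  α / 2 * (-α ^ 2 + β ^ 2 + γ ^ 2) = 0 ∧ β / 2 * (α ^ 2 - β ^ 2 + γ ^ 2) = 0 ∧
    γ / 2 * (α ^ 2 + β ^ 2 + 2 * E * α * β - γ ^ 2) = 0

lemma IsEquilibrium.cases {E α β γ : ℝ} (h : IsEquilibrium E α β γ) (hβ : 0 ≤ β) (hβα : β ≤ α)
    (hγ : 0 ≤ γ) : (0 < β ∧ α = β ∧ γ = 0) ∨ (β = 0 ∧ α = γ) := by
  obtain ⟨hα', hβ', hγ'⟩ := h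
  rcases hβ.eq_or_lt with rfl | hβ
  · refine Or.inr ⟨rfl, ?_⟩
    rcases hβα.eq_or_lt with rfl | hα
    · have : γ ^ 3 = 0 := by linear_combination -2 * hγ'
      exact (pow_eq_zero_iff three_ne_zero).1 this |>.symm
    · have : α ^ 2 = γ ^ 2 := by
        have := (mul_eq_zero.1 hα').resolve_left (by positivity)
        linarith
      exact (sq_eq_sq₀ hα.le hγ).1 this
  · have hsum : α ^ 2 - β ^ 2 + γ ^ 2 = 0 := (mul_eq_zero.1 hβ').resolve_left (by positivity)
    have hγ0 : γ = 0 := by nlinarith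
    subst hγ0
    exact Or.inl ⟨hβ, by nlinarith, rfl⟩

namespace IsPosSolution

variable {E η : ℝ} {a b c : ℝ → ℝ}

lemma hasDerivAt_D (h : IsPosSolution E η a b c) {t : ℝ} (ht : t < η) :
    HasDerivAt (D a b c) (-(D a b c t + 2 * c t ^ 2) * (a t ^ 2 + b t ^ 2 - c t ^ 2)
      - 2 * E * a t * b t * c t ^ 2) t := by
  refine ((((h.hasDerivAt_a t ht).fun_pow 2).fun_sub ((h.hasDerivAt_b t ht).fun_pow 2)).fun_sub
    ((h.hasDerivAt_c t ht).fun_pow 2)).congr_deriv ?_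
  simp only [D]
  push_cast
  ring

lemma hasDerivAt_F (h : IsPosSolution E η a b c) {t : ℝ} (ht : t < η) :
    HasDerivAt (F E a b c) (D a b c t * (D a b c t + 2 * c t ^ 2)) t := by
  refine ((((h.hasDerivAt_c t ht).fun_pow 2).fun_sub ((h.hasDerivAt_a t ht).fun_pow 2)).fun_sub
    ((h.hasDerivAt_b t ht).fun_pow 2)).fun_sub
    ((((h.hasDerivAt_a t ht).const_mul (2 * E)).fun_mul (h.hasDerivAt_b t ht))) |>.congr_deriv ?_
  simp only [D]
  push_cast
  ring

lemma monotoneOn_b (h : IsPosSolution E η a b c) {t₀ : ℝ} (ht₀ : t₀ < η) :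
    MonotoneOn b (Iic t₀) := by
  refine monotoneOn_Iic_of_hasDerivAt_nonneg (fun t ht => h.hasDerivAt_b t (ht.trans_lt ht₀))
    fun t ht => ?_
  have hb := h.b_pos t (ht.trans_lt ht₀)
  have : b t ^ 2 ≤ a t ^ 2 := pow_le_pow_left₀ hb.le (h.b_le_a t (ht.trans_lt ht₀)) 2
  have : 0 ≤ a t ^ 2 - b t ^ 2 + c t ^ 2 := by nlinarith
  positivity

lemma exists_tendsto_b (h : IsPosSolution E η a b c) : ∃ β, Tendsto b atBot (𝓝 β) :=
  (h.monotoneOn_b (sub_one_lt η)).exists_tendsto_atBot fun t ht =>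
    (h.b_pos t (ht.trans_lt (sub_one_lt η))).le

lemma D_pos_of_le (h : IsPosSolution E η a b c) (hE : 0 ≤ E) {t₁ : ℝ} (ht₁ : t₁ < η)
    (hD : 0 < D a b c t₁) : ∀ t ≤ t₁, 0 < D a b c t := by
  refine lt_of_hasDerivAt_neg_at_level (fun t ht => h.hasDerivAt_D (ht.trans_lt ht₁))
    (fun t ht hDt => ?_) le_rfl hD
  have ha := h.a_pos t (ht.trans_lt ht₁)
  have hb := h.b_pos t (ht.trans_lt ht₁)
  have hc := h.c_pos t (ht.trans_lt ht₁)
  have hsq : a t ^ 2 = b t ^ 2 + c t ^ 2 := by simp only [D] at hDt; linarith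
  rw [hDt, hsq]
  nlinarith [mul_pos (pow_pos hb 2) (pow_pos hc 2),
    mul_nonneg (mul_nonneg (mul_nonneg hE ha.le) hb.le) (pow_pos hc 2).le]

lemma exists_tendsto_a_c_of_D_pos (h : IsPosSolution E η a b c) (hE : 0 ≤ E) {t₁ : ℝ}
    (ht₁ : t₁ < η) (hD : 0 < D a b c t₁) :
    (∃ α, Tendsto a atBot (𝓝 α)) ∧ ∃ γ, Tendsto c atBot (𝓝 γ) := by
  have hη : ∀ t ≤ t₁, t < η := fun t ht => ht.trans_lt ht₁
  have hDpos := h.D_pos_of_le hE ht₁ hD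
  have hc_mono : MonotoneOn c (Iic t₁) := by
    refine monotoneOn_Iic_of_hasDerivAt_nonneg (fun t ht => h.hasDerivAt_c t (hη t ht))
      fun t ht => ?_
    have := hDpos t ht
    have ha := h.a_pos t (hη t ht)
    have hb := h.b_pos t (hη t ht)
    have hc := h.c_pos t (hη t ht)
    have : 0 ≤ a t ^ 2 + b t ^ 2 + 2 * E * a t * b t - c t ^ 2 := by
      simp only [D] at this
      nlinarith [mul_nonneg (mul_nonneg hE ha.le) hb.le]
    positivity
  have ha_anti : AntitoneOn a (Iic t₁) := by
    refine antitoneOn_Iic_of_hasDerivAt_nonpos (fun t ht => h.hasDerivAt_a t (hη t ht))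
      fun t ht => ?_
    have := hDpos t ht
    have ha := h.a_pos t (hη t ht)
    simp only [D] at this
    nlinarith
  set K := b t₁ ^ 2 + c t₁ ^ 2
  have ha_sq : ∀ t ≤ t₁, a t ^ 2 ≤ K := by
    refine le_of_hasDerivAt_le_mul_sub (by positivity)
      (fun t ht => (h.hasDerivAt_a t (hη t ht)).pow 2)
      (fun t ht => pow_pos (h.a_pos t (hη t ht)) 2) fun t ht => ?_
    have hb := pow_le_pow_left₀ (h.b_pos t (hη t ht)).le
      (h.monotoneOn_b ht₁ ht self_mem_Iic ht) 2
    have hc := pow_le_pow_left₀ (h.c_pos t (hη t ht)).le (hc_mono ht self_mem_Iic ht) 2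
    have ha := pow_pos (h.a_pos t (hη t ht)) 2
    push_cast
    nlinarith
  exact ⟨ha_anti.exists_tendsto_atBot fun t ht =>
      (le_abs_self _).trans (Real.abs_le_sqrt (ha_sq t ht)),
    hc_mono.exists_tendsto_atBot fun t ht => (h.c_pos t (hη t ht)).le⟩

lemma monotoneOn_a_of_D_nonpos (h : IsPosSolution E η a b c) (hD : ∀ t < η, D a b c t ≤ 0)
    {t₀ : ℝ} (ht₀ : t₀ < η) : MonotoneOn a (Iic t₀) := by
  refine monotoneOn_Iic_of_hasDerivAt_nonneg (fun t ht => h.hasDerivAt_a t (ht.trans_lt ht₀))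
    fun t ht => ?_
  have := hD t (ht.trans_lt ht₀)
  have ha := h.a_pos t (ht.trans_lt ht₀)
  simp only [D] at this
  nlinarith

lemma c_sq_le_of_D_nonpos (h : IsPosSolution E η a b c) (hE : 0 ≤ E)
    (hD : ∀ t < η, D a b c t ≤ 0) {t₀ : ℝ} (ht₀ : t₀ < η) :
    ∀ t ≤ t₀, c t ^ 2 ≤ (2 + 2 * E) * a t₀ ^ 2 := by
  have hη : ∀ t ≤ t₀, t < η := fun t ht => ht.trans_lt ht₀
  have hab_le : ∀ t ≤ t₀, a t ^ 2 + b t ^ 2 + 2 * E * a t * b t ≤ (2 + 2 * E) * a t₀ ^ 2 := by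
    intro t ht
    have ha := h.a_pos t (hη t ht)
    have hb := h.b_pos t (hη t ht)
    have hat : a t ≤ a t₀ := h.monotoneOn_a_of_D_nonpos hD ht₀ ht self_mem_Iic ht
    have hbt : b t ≤ a t₀ := (h.b_le_a t (hη t ht)).trans hat
    have hab : a t * b t ≤ a t₀ ^ 2 := by nlinarith
    nlinarith [mul_le_mul_of_nonneg_left hab hE]
  refine le_of_hasDerivAt_le_mul_sub (by positivity)
    (fun t ht => (h.hasDerivAt_c t (hη t ht)).pow 2)
    (fun t ht => pow_pos (h.c_pos t (hη t ht)) 2) fun t ht => ?_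
  have := hab_le t ht
  have hc := pow_pos (h.c_pos t (hη t ht)) 2
  push_cast
  nlinarith

lemma exists_tendsto_a_c_of_D_nonpos (h : IsPosSolution E η a b c) (hE : 0 ≤ E)
    (hD : ∀ t < η, D a b c t ≤ 0) :
    (∃ α, Tendsto a atBot (𝓝 α)) ∧ ∃ γ, Tendsto c atBot (𝓝 γ) := by
  set t₀ := η - 1
  have hη : ∀ t ≤ t₀, t < η := fun t ht => ht.trans_lt (sub_one_lt η)
  have hF_anti : AntitoneOn (F E a b c) (Iic t₀) := by
    refine antitoneOn_Iic_of_hasDerivAt_nonpos (fun t ht => h.hasDerivAt_F (hη t ht))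
      fun t ht => mul_nonpos_of_nonpos_of_nonneg (hD t (hη t ht)) ?_
    have hb := h.b_pos t (hη t ht)
    have : b t ^ 2 ≤ a t ^ 2 := pow_le_pow_left₀ hb.le (h.b_le_a t (hη t ht)) 2
    simp only [D]
    nlinarith
  have hF_le : ∀ t ≤ t₀, F E a b c t ≤ (2 + 2 * E) * a t₀ ^ 2 := by
    intro t ht
    have ha := h.a_pos t (hη t ht)
    have hb := h.b_pos t (hη t ht)
    simp only [F]
    nlinarith [h.c_sq_le_of_D_nonpos hE hD (sub_one_lt η) t ht,
      mul_nonneg (mul_nonneg hE ha.le) hb.le]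
  obtain ⟨φ, hφ⟩ := hF_anti.exists_tendsto_atBot hF_le
  obtain ⟨α, hα⟩ := (h.monotoneOn_a_of_D_nonpos hD (sub_one_lt η)).exists_tendsto_atBot
    fun t ht => (h.a_pos t (hη t ht)).le
  obtain ⟨β, hβ⟩ := h.exists_tendsto_b
  have hc_sq_lim : Tendsto (fun t => c t ^ 2) atBot
      (𝓝 (φ + α ^ 2 + β ^ 2 + 2 * E * α * β)) := by
    refine (((hφ.add (hα.pow 2)).add (hβ.pow 2)).add
      ((tendsto_const_nhds.mul hα).mul hβ)).congr fun t => ?_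
    simp only [F]
    ring
  exact ⟨⟨α, hα⟩, _, tendsto_sqrt_of_tendsto_sq
    ((eventually_lt_atBot η).mono fun t ht => (h.c_pos t ht).le) hc_sq_lim⟩

lemma exists_tendsto (h : IsPosSolution E η a b c) (hE : 0 ≤ E) :
    ∃ α β γ, Tendsto a atBot (𝓝 α) ∧ Tendsto b atBot (𝓝 β) ∧ Tendsto c atBot (𝓝 γ) := by
  obtain ⟨β, hβ⟩ := h.exists_tendsto_b
  obtain ⟨⟨α, hα⟩, γ, hγ⟩ : (∃ α, Tendsto a atBot (𝓝 α)) ∧ ∃ γ, Tendsto c atBot (𝓝 γ) := by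
    by_cases hD : ∃ t < η, 0 < D a b c t
    · obtain ⟨t₁, ht₁, hD⟩ := hD
      exact h.exists_tendsto_a_c_of_D_pos hE ht₁ hD
    · push Not at hD
      exact h.exists_tendsto_a_c_of_D_nonpos hE hD
  exact ⟨α, β, γ, hα, hβ, hγ⟩

lemma isEquilibrium_of_tendsto (h : IsPosSolution E η a b c) {α β γ : ℝ}
    (hα : Tendsto a atBot (𝓝 α)) (hβ : Tendsto b atBot (𝓝 β)) (hγ : Tendsto c atBot (𝓝 γ)) :
    IsEquilibrium E α β γ := by
  have hη : ∀ t ≤ η - 1, t < η := fun t ht => ht.trans_lt (sub_one_lt η)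
  refine ⟨eq_zero_of_tendsto_of_hasDerivAt_atBot (fun t ht => h.hasDerivAt_a t (hη t ht)) hα
      ((hα.div_const 2).mul (((hα.pow 2).neg.add (hβ.pow 2)).add (hγ.pow 2))),
    eq_zero_of_tendsto_of_hasDerivAt_atBot (fun t ht => h.hasDerivAt_b t (hη t ht)) hβ
      ((hβ.div_const 2).mul (((hα.pow 2).sub (hβ.pow 2)).add (hγ.pow 2))),
    eq_zero_of_tendsto_of_hasDerivAt_atBot (fun t ht => h.hasDerivAt_c t (hη t ht)) hγ
      ((hγ.div_const 2).mul ((((hα.pow 2).add (hβ.pow 2)).add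
        ((tendsto_const_nhds.mul hα).mul hβ)).sub (hγ.pow 2)))⟩

end IsPosSolution

end SU2

/-- A positive solution with `a ≥ b` of the SU(2) centrally flat ODE
system on `(−∞, η)` converges, as `t → −∞`, either to an equilibrium `(q, q, 0)` with
`q > 0`, or to an equilibrium `(q, 0, q)` with `q ≥ 0`. -/
theorem su2_system_limit_at_minus_infinity
    (A η : ℝ) (a b c : ℝ → ℝ)
    (ha : ∀ t ∈ Set.Iio η,
      HasDerivAt a (a t / 2 * (-(a t) ^ 2 + (b t) ^ 2 + (c t) ^ 2)) t)
    (hb : ∀ t ∈ Set.Iio η,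
      HasDerivAt b (b t / 2 * ((a t) ^ 2 - (b t) ^ 2 + (c t) ^ 2)) t)
    (hc : ∀ t ∈ Set.Iio η, HasDerivAt c
      (c t / 2 * ((a t) ^ 2 + (b t) ^ 2 + 2 * Real.exp (-A) * a t * b t - (c t) ^ 2)) t)
    (hapos : ∀ t ∈ Set.Iio η, 0 < a t)
    (hbpos : ∀ t ∈ Set.Iio η, 0 < b t)
    (hcpos : ∀ t ∈ Set.Iio η, 0 < c t)
    (hab : ∀ t ∈ Set.Iio η, b t ≤ a t) :
    (∃ q : ℝ, 0 < q ∧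
      Filter.Tendsto a Filter.atBot (nhds q) ∧
      Filter.Tendsto b Filter.atBot (nhds q) ∧
      Filter.Tendsto c Filter.atBot (nhds 0)) ∨
    (∃ q : ℝ, 0 ≤ q ∧
      Filter.Tendsto a Filter.atBot (nhds q) ∧
      Filter.Tendsto b Filter.atBot (nhds 0) ∧
      Filter.Tendsto c Filter.atBot (nhds q)) := by
  have h : SU2.IsPosSolution (Real.exp (-A)) η a b c := ⟨ha, hb, hc, hapos, hbpos, hcpos, hab⟩
  obtain ⟨α, β, γ, hα, hβ, hγ⟩ := h.exists_tendsto (Real.exp_pos _).le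
  have hη : ∀ᶠ t in atBot, t < η := eventually_lt_atBot η
  have hβ₀ : 0 ≤ β := ge_of_tendsto hβ (hη.mono fun t ht => (hbpos t ht).le)
  have hγ₀ : 0 ≤ γ := ge_of_tendsto hγ (hη.mono fun t ht => (hcpos t ht).le)
  have hβα : β ≤ α := le_of_tendsto_of_tendsto hβ hα (hη.mono hab)
  rcases (h.isEquilibrium_of_tendsto hα hβ hγ).cases hβ₀ hβα hγ₀ with ⟨hβ₀, rfl, rfl⟩ | ⟨rfl, rfl⟩
  · exact Or.inl ⟨α, hβ₀, hα, hβ, hγ⟩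
  · exact Or.inr ⟨α, hγ₀, hα, hβ, hγ⟩
end

section
/- Let A ∈ ℝ and let a, b, c : (−∞, η) → ℝ be a solution of the SU(2) centrally flat ODE system a' = (a/2)(−a² + b² + c²), b' = (b/2)(a² − b² + c²), c' = (c/2)(a² + b² + 2e^{−A}ab − c²), with a, b, c everywhere positive. If there exists q > 0 such that a(t) → q and b(t) → q as t → −∞, then a(t) = b(t) for all t ∈ (−∞, η). -/
/-!
The quantity `s = a⁻² - b⁻²` satisfies the linear equation `s' = -(a² + b² + c²) s`, so `s²`
is nonincreasing. Since `a, b → q ≠ 0`, `s² → 0` as `t → -∞`; a nonincreasing, nonnegative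
function with limit `0` at `-∞` vanishes identically, hence `a² = b²`, and `a = b` by positivity.
-/

open Set Filter Topology

theorem eq_zero_of_hasDerivAt_mul_of_nonpos_of_tendsto_atBot {η : ℝ} {f k : ℝ → ℝ}
    (hf : ∀ t ∈ Iio η, HasDerivAt f (k t * f t) t) (hk : ∀ t ∈ Iio η, k t ≤ 0)
    (hlim : Tendsto f atBot (𝓝 0)) : ∀ t ∈ Iio η, f t = 0 := by
  have hsq : AntitoneOn (fun t => f t ^ 2) (Iio η) := by
    refine antitoneOn_of_hasDerivWithinAt_nonpos (convex_Iio η)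
      (fun t ht => ((hf t ht).continuousAt.pow 2).continuousWithinAt)
      (f' := fun t => 2 * k t * f t ^ 2) ?_ ?_
    · rw [interior_Iio]
      intro t ht
      exact ((hf t ht).fun_pow 2).hasDerivWithinAt.congr_deriv (by push_cast; ring)
    · rw [interior_Iio]
      intro t ht
      nlinarith [hk t ht, sq_nonneg (f t)]
  intro t ht
  have hle : f t ^ 2 ≤ 0 := by
    refine ge_of_tendsto (by simpa using hlim.pow 2) ?_
    filter_upwards [eventually_le_atBot t] with t' ht'
    exact hsq (ht'.trans_lt ht) ht ht'
  exact pow_eq_zero_iff two_ne_zero |>.mp (le_antisymm hle (sq_nonneg _))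

theorem HasDerivAt.inv_sq_of_eq_half_mul {u : ℝ → ℝ} {X t : ℝ}
    (hu : HasDerivAt u (u t / 2 * (-(u t) ^ 2 + X)) t) (hu0 : u t ≠ 0) :
    HasDerivAt (fun t => (u t ^ 2)⁻¹) (1 - X * (u t ^ 2)⁻¹) t := by
  refine ((hu.fun_pow 2).fun_inv (pow_ne_zero 2 hu0)).congr_deriv ?_
  field_simp
  ring

theorem hasDerivAt_inv_sq_sub_inv_sq {a b : ℝ → ℝ} {c t : ℝ}
    (ha : HasDerivAt a (a t / 2 * (-(a t) ^ 2 + (b t) ^ 2 + c ^ 2)) t)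
    (hb : HasDerivAt b (b t / 2 * ((a t) ^ 2 - (b t) ^ 2 + c ^ 2)) t)
    (ha0 : a t ≠ 0) (hb0 : b t ≠ 0) :
    HasDerivAt (fun t => (a t ^ 2)⁻¹ - (b t ^ 2)⁻¹)
      (-((a t) ^ 2 + (b t) ^ 2 + c ^ 2) * ((a t ^ 2)⁻¹ - (b t ^ 2)⁻¹)) t := by
  have hA := HasDerivAt.inv_sq_of_eq_half_mul (X := b t ^ 2 + c ^ 2)
    (by convert ha using 2; ring) ha0
  have hB := HasDerivAt.inv_sq_of_eq_half_mul (X := a t ^ 2 + c ^ 2)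
    (by convert hb using 2; ring) hb0
  refine (hA.sub hB).congr_deriv ?_
  field_simp
  ring

theorem su2_system_biaxial_when_converging_to_qq0_general
    (η : ℝ) (a b c : ℝ → ℝ)
    (ha : ∀ t ∈ Set.Iio η,
      HasDerivAt a (a t / 2 * (-(a t) ^ 2 + (b t) ^ 2 + (c t) ^ 2)) t)
    (hb : ∀ t ∈ Set.Iio η,
      HasDerivAt b (b t / 2 * ((a t) ^ 2 - (b t) ^ 2 + (c t) ^ 2)) t)
    (hapos : ∀ t ∈ Set.Iio η, 0 < a t)
    (hbpos : ∀ t ∈ Set.Iio η, 0 < b t)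
    (q : ℝ) (hq : 0 < q)
    (hlima : Filter.Tendsto a Filter.atBot (nhds q))
    (hlimb : Filter.Tendsto b Filter.atBot (nhds q)) :
    ∀ t ∈ Set.Iio η, a t = b t := by
  have hq2 : q ^ 2 ≠ 0 := pow_ne_zero 2 hq.ne'
  have hlim : Tendsto (fun t => (a t ^ 2)⁻¹ - (b t ^ 2)⁻¹) atBot (𝓝 0) := by
    simpa using ((hlima.pow 2).inv₀ hq2).sub ((hlimb.pow 2).inv₀ hq2)
  have hzero := eq_zero_of_hasDerivAt_mul_of_nonpos_of_tendsto_atBot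
    (fun t ht => hasDerivAt_inv_sq_sub_inv_sq (ha t ht) (hb t ht)
      (hapos t ht).ne' (hbpos t ht).ne')
    (fun t _ => by nlinarith [sq_nonneg (a t), sq_nonneg (b t), sq_nonneg (c t)]) hlim
  intro t ht
  have hsq : a t ^ 2 = b t ^ 2 := inv_injective (sub_eq_zero.mp (hzero t ht))
  exact (pow_left_inj₀ (hapos t ht).le (hbpos t ht).le two_ne_zero).mp hsq

/-- A positive solution of the SU(2) centrally flat ODE system on
`(−∞, η)` with `a(t) → q` and `b(t) → q` as `t → −∞` for some `q > 0` satisfies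
`a ≡ b` on `(−∞, η)`. -/
theorem su2_system_biaxial_when_converging_to_qq0
    (A η : ℝ) (a b c : ℝ → ℝ)
    (ha : ∀ t ∈ Set.Iio η,
      HasDerivAt a (a t / 2 * (-(a t) ^ 2 + (b t) ^ 2 + (c t) ^ 2)) t)
    (hb : ∀ t ∈ Set.Iio η,
      HasDerivAt b (b t / 2 * ((a t) ^ 2 - (b t) ^ 2 + (c t) ^ 2)) t)
    (hc : ∀ t ∈ Set.Iio η, HasDerivAt c
      (c t / 2 * ((a t) ^ 2 + (b t) ^ 2 + 2 * Real.exp (-A) * a t * b t - (c t) ^ 2)) t)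
    (hapos : ∀ t ∈ Set.Iio η, 0 < a t)
    (hbpos : ∀ t ∈ Set.Iio η, 0 < b t)
    (hcpos : ∀ t ∈ Set.Iio η, 0 < c t)
    (q : ℝ) (hq : 0 < q)
    (hlima : Filter.Tendsto a Filter.atBot (nhds q))
    (hlimb : Filter.Tendsto b Filter.atBot (nhds q)) :
    ∀ t ∈ Set.Iio η, a t = b t :=
  su2_system_biaxial_when_converging_to_qq0_general η a b c ha hb hapos hbpos q hq hlima hlimb
end

section
/- Let γ > 0 and t₀ ∈ ℝ. There do not exist differentiable functions w₁, w₃ : [t₀, ∞) → ℝ with w₁(t₀) > 0 and w₃(t₀) > 0 satisfying w₁' = γ·w₁·w₃ and w₃' = w₁² on [t₀, ∞). Equivalently, any maximal solution of this system with positive initial data has finite right endpoint η < ∞ of its interval of existence. -/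
/-!
The quantity `w₁² - γ w₃²` is conserved and `w₃` is nondecreasing, so `v = w₃ - w₃(t₀) ≥ 0`
obeys the Riccati inequality `v' = w₁² ≥ w₁(t₀)² + γ v²`. Then `arctan v` grows at least
linearly, which is impossible on an unbounded time interval since `arctan < π / 2`.
-/

open Set Real

lemma Convex.monotoneOn_of_forall_hasDerivWithinAt_nonneg {D : Set ℝ} (hD : Convex ℝ D)
    {f f' : ℝ → ℝ} (hf : ∀ x ∈ D, HasDerivWithinAt f (f' x) D x) (hf' : ∀ x ∈ D, 0 ≤ f' x) :
    MonotoneOn f D :=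
  monotoneOn_of_hasDerivWithinAt_nonneg hD (fun x hx => (hf x hx).continuousWithinAt)
    (fun x hx => (hf x (interior_subset hx)).mono interior_subset)
    (fun x hx => hf' x (interior_subset hx))

lemma false_of_hasDerivWithinAt_Ici_of_mul_one_add_sq_le {u u' : ℝ → ℝ} {c t₀ : ℝ} (hc : 0 < c)
    (hu : ∀ t ∈ Ici t₀, HasDerivWithinAt u (u' t) (Ici t₀) t)
    (hu' : ∀ t ∈ Ici t₀, c * (1 + u t ^ 2) ≤ u' t) : False := by
  have hmono : MonotoneOn (fun t => arctan (u t) - c * t) (Ici t₀) := by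
    refine (convex_Ici t₀).monotoneOn_of_forall_hasDerivWithinAt_nonneg
      (fun t ht => (hu t ht).arctan.sub ((hasDerivWithinAt_id t _).const_mul c)) fun t ht => ?_
    have hpos : 0 < 1 + u t ^ 2 := by positivity
    rw [mul_one, sub_nonneg, one_div_mul_eq_div, le_div_iff₀ hpos]
    exact hu' t ht
  have hT : t₀ + π / c ∈ Ici t₀ := by
    simp only [mem_Ici, le_add_iff_nonneg_right]
    positivity
  have hgrowth := hmono self_mem_Ici hT hT
  have hcT : c * (t₀ + π / c) = c * t₀ + π := by field_simp
  simp only [hcT] at hgrowth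
  linarith [neg_pi_div_two_lt_arctan (u t₀), arctan_lt_pi_div_two (u (t₀ + π / c))]

/-- For `γ > 0`, there is no solution of the system `w₁' = γ·w₁·w₃`,
`w₃' = w₁²` on all of `[t₀, ∞)` with positive initial data `w₁(t₀) > 0`, `w₃(t₀) > 0`:
such solutions blow up in finite forward time. -/
theorem biaxial_system_finite_time_blowup
    (γ : ℝ) (hγ : 0 < γ) (t₀ : ℝ) :
    ¬ ∃ w₁ w₃ : ℝ → ℝ, 0 < w₁ t₀ ∧ 0 < w₃ t₀ ∧
      (∀ t ∈ Set.Ici t₀, HasDerivWithinAt w₁ (γ * w₁ t * w₃ t) (Set.Ici t₀) t) ∧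
      (∀ t ∈ Set.Ici t₀, HasDerivWithinAt w₃ ((w₁ t) ^ 2) (Set.Ici t₀) t) := by
  rintro ⟨w₁, w₃, hw₁, hw₃, h₁, h₃⟩
  have hw₃_mono : MonotoneOn w₃ (Ici t₀) :=
    (convex_Ici t₀).monotoneOn_of_forall_hasDerivWithinAt_nonneg h₃ fun t _ => sq_nonneg _
  have henergy_mono : MonotoneOn (fun t => w₁ t ^ 2 - γ * w₃ t ^ 2) (Ici t₀) := by
    refine (convex_Ici t₀).monotoneOn_of_forall_hasDerivWithinAt_nonneg
      (fun t ht => ((h₁ t ht).pow 2).sub (((h₃ t ht).pow 2).const_mul γ))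
      fun t _ => le_of_eq (by ring)
  have hmin : 0 < min (w₁ t₀ ^ 2) γ := lt_min (by positivity) hγ
  refine false_of_hasDerivWithinAt_Ici_of_mul_one_add_sq_le hmin
    (u := fun t => w₃ t - w₃ t₀) (fun t ht => (h₃ t ht).sub_const _) fun t ht => ?_
  have hv : 0 ≤ w₃ t - w₃ t₀ := sub_nonneg.2 (hw₃_mono self_mem_Ici ht ht)
  have henergy := henergy_mono self_mem_Ici ht ht
  have hriccati : w₁ t₀ ^ 2 + γ * (w₃ t - w₃ t₀) ^ 2 ≤ w₁ t ^ 2 := by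
    nlinarith [mul_nonneg hγ.le (mul_nonneg hv hw₃.le)]
  nlinarith [min_le_left (w₁ t₀ ^ 2) γ, min_le_right (w₁ t₀ ^ 2) γ, sq_nonneg (w₃ t - w₃ t₀)]
end

section
/- Let γ > 0 and define a, c : (−∞, 0) → ℝ by a(t) = (−γt)^{−1/2} and c(t) = (−t)^{−1/2}. Then a and c satisfy the biaxial SU(2) centrally flat system a' = (a/2)c² and c' = (c/2)(2γa² − c²) on (−∞, 0), and (a(t), c(t)) → (0, 0) as t → −∞. -/
/-!
Since `-(γ t) = γ · (-t)`, the solution is `a = γ^(-1/2) c` with `c(t) = (-t)^(-1/2)`, so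
`γ a² = c²` and the system collapses to the single equation `c' = c³/2`, which is the power rule.
-/

open Filter Topology

lemma rpow_neg_half_sq {x : ℝ} (hx : 0 ≤ x) : (x ^ (-(1 / 2) : ℝ)) ^ 2 = x⁻¹ := by
  rw [← Real.rpow_mul_natCast hx]
  norm_num [Real.rpow_neg_one]

lemma neg_mul_rpow {k t : ℝ} (hk : 0 ≤ k) (ht : t ≤ 0) (p : ℝ) :
    (-(k * t)) ^ p = k ^ p * (-t) ^ p := by
  rw [← Real.mul_rpow hk (neg_nonneg.mpr ht), neg_mul_eq_mul_neg]

lemma hasDerivAt_neg_rpow_neg_half {t : ℝ} (ht : t < 0) :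
    HasDerivAt (fun s : ℝ => (-s) ^ (-(1 / 2) : ℝ)) (((-t) ^ (-(1 / 2) : ℝ)) ^ 3 / 2) t := by
  refine ((hasDerivAt_neg t).rpow_const (p := -(1 / 2))
    (Or.inl (by simpa using ht.ne))).congr_deriv ?_
  rw [← Real.rpow_mul_natCast (neg_nonneg.mpr ht.le)]
  norm_num
  ring

lemma tendsto_neg_rpow_neg_atBot {y : ℝ} (hy : 0 < y) :
    Tendsto (fun s : ℝ => (-s) ^ (-y)) atBot (𝓝 0) :=
  (tendsto_rpow_neg_atTop hy).comp tendsto_neg_atBot_atTop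

/-- For `γ > 0`, the functions `a(t) = (−γt)^(−1/2)` and
`c(t) = (−t)^(−1/2)` on `(−∞, 0)` solve the biaxial SU(2) centrally flat system
`a' = (a/2)c²`, `c' = (c/2)(2γa² − c²)`, and `(a, c) → (0, 0)` as `t → −∞`. -/
theorem biaxial_explicit_solution_to_origin
    (γ : ℝ) (hγ : 0 < γ) (a c : ℝ → ℝ)
    (hadef : ∀ t : ℝ, a t = (-(γ * t)) ^ (-(1 / 2) : ℝ))
    (hcdef : ∀ t : ℝ, c t = (-t) ^ (-(1 / 2) : ℝ)) :
    (∀ t ∈ Set.Iio (0 : ℝ), HasDerivAt a (a t / 2 * (c t) ^ 2) t) ∧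
    (∀ t ∈ Set.Iio (0 : ℝ),
      HasDerivAt c (c t / 2 * (2 * γ * (a t) ^ 2 - (c t) ^ 2)) t) ∧
    Filter.Tendsto a Filter.atBot (nhds 0) ∧
    Filter.Tendsto c Filter.atBot (nhds 0) := by
  set k : ℝ := γ ^ (-(1 / 2) : ℝ)
  have hc : c = fun s => (-s) ^ (-(1 / 2) : ℝ) := funext hcdef
  have hac : ∀ t < 0, a t = k * c t := fun t ht => by
    rw [hadef, hcdef, neg_mul_rpow hγ.le ht.le]
  have hac_ev : ∀ t < 0, a =ᶠ[𝓝 t] fun s => k * c s := fun t ht =>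
    eventually_of_mem (Iio_mem_nhds ht) fun s hs => hac s hs
  have hγa : ∀ t < 0, γ * a t ^ 2 = c t ^ 2 := fun t ht => by
    rw [hac t ht, mul_pow, rpow_neg_half_sq hγ.le, ← mul_assoc, mul_inv_cancel₀ hγ.ne', one_mul]
  have hc' : ∀ t < 0, HasDerivAt c (c t ^ 3 / 2) t := fun t ht => by
    rw [hc]
    exact hasDerivAt_neg_rpow_neg_half ht
  have hc_lim : Tendsto c atBot (𝓝 0) := hc ▸ tendsto_neg_rpow_neg_atBot one_half_pos
  refine ⟨fun t ht => ?_, fun t ht => ?_, ?_, hc_lim⟩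
  · refine (((hc' t ht).const_mul k).congr_of_eventuallyEq (hac_ev t ht)).congr_deriv ?_
    rw [hac t ht]
    ring
  · refine (hc' t ht).congr_deriv ?_
    linear_combination -c t * hγa t ht
  · have hlim := hc_lim.const_mul k
    rw [mul_zero] at hlim
    exact hlim.congr' ((eventually_lt_atBot 0).mono fun t ht => (hac t ht).symm)
end
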